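/- arXiv:math/0405346 — 6 statements merged into one kernel-verified Lean document; each statement's English description precedes it below -/
import Mathlib

section
/- For every signed permutation sigma in the hyperoctahedral group B_n, there exist unique elements sigma_j in R_j^B for 0 <= j <= n-1 such that sigma = sigma_0 sigma_1 ... sigma_{n-1}; moreover, the resulting expression in the Coxeter generators is reduced. -/
open Equiv Finset

namespace SignedEven

/-- Type-B Coxeter generators inside `Equiv.Perm ℤ`:
`s 0` is the sign change in the first position, `s i = (i, i+1)(-i, -(i+1))`. -/
def s (i : ℕ) : Equiv.Perm ℤ :=
  if i = 0 then Equiv.swap 1 (-1)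
  else Equiv.swap (i : ℤ) ((i : ℤ) + 1) * Equiv.swap (-(i : ℤ)) (-((i : ℤ) + 1))

/-- Generators of the group of signed even permutations: `a 0 = s 0`, `a i = s 1 * s (i+1)`. -/
def a (i : ℕ) : Equiv.Perm ℤ := if i = 0 then s 0 else s 1 * s (i + 1)

/-- `σ` is a signed permutation on `{±1, …, ±n}` (an element of `B_n`). -/
def isB (n : ℕ) (σ : Equiv.Perm ℤ) : Prop :=
  (∀ i : ℤ, σ (-i) = -σ i) ∧ ∀ i : ℤ, (n : ℤ) < |i| → σ i = i

/-- `σ` is an (unsigned) permutation of `{1, …, n}` (an element of `S_n ⊆ B_n`). -/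
def isS (n : ℕ) (σ : Equiv.Perm ℤ) : Prop := isB n σ ∧ ∀ i : ℤ, 0 < i → 0 < σ i

/-- inversion number of the window `[σ(1), …, σ(n)]`. -/
noncomputable def invStat (n : ℕ) (σ : Equiv.Perm ℤ) : ℕ :=
  (((Finset.Icc (1 : ℤ) (n : ℤ)) ×ˢ (Finset.Icc (1 : ℤ) (n : ℤ))).filter
    (fun p => p.1 < p.2 ∧ σ p.2 < σ p.1)).card

/-- inversion number of the window of `|σ|`; its parity is the sign of `Abs σ`. -/
noncomputable def invAbs (n : ℕ) (σ : Equiv.Perm ℤ) : ℕ :=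
  (((Finset.Icc (1 : ℤ) (n : ℤ)) ×ˢ (Finset.Icc (1 : ℤ) (n : ℤ))).filter
    (fun p => p.1 < p.2 ∧ |σ p.2| < |σ p.1|)).card

/-- `σ ∈ L_n = C₂ ≀ A_n`: a signed permutation whose underlying permutation is even. -/
def isL (n : ℕ) (σ : Equiv.Perm ℤ) : Prop := isB n σ ∧ Even (invAbs n σ)

/-- `σ ∈ A_n`: an unsigned even permutation. -/
def isA (n : ℕ) (σ : Equiv.Perm ℤ) : Prop := isS n σ ∧ Even (invStat n σ)

/-- `Neg(σ) = {i ∈ [n] : σ(i) < 0}`. -/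
noncomputable def negSet (n : ℕ) (σ : Equiv.Perm ℤ) : Finset ℤ :=
  (Finset.Icc (1 : ℤ) (n : ℤ)).filter (fun i => σ i < 0)

/-- `σ ∈ D_n`: a signed permutation with an even number of negative window entries. -/
def isD (n : ℕ) (σ : Equiv.Perm ℤ) : Prop := isB n σ ∧ Even (negSet n σ).card

/-- the sum of the elements of `Neg(σ)`. -/
noncomputable def negSum (n : ℕ) (σ : Equiv.Perm ℤ) : ℤ := ∑ i ∈ negSet n σ, i

/-- `del_B(σ)`: the number of non-initial left-to-right minima of the window. -/
noncomputable def delB (n : ℕ) (σ : Equiv.Perm ℤ) : ℕ :=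
  ((Finset.Icc (2 : ℤ) (n : ℤ)).filter
    (fun j => ∀ i ∈ Finset.Icc (1 : ℤ) (n : ℤ), i < j → σ j < σ i)).card

/-- the Coxeter length of `σ ∈ B_n` with respect to `s 0, …, s (n-1)`. -/
noncomputable def ellB (n : ℕ) (σ : Equiv.Perm ℤ) : ℕ :=
  sInf {k | ∃ l : List ℕ, l.length = k ∧ (∀ i ∈ l, i < n) ∧ (l.map s).prod = σ}

/-- the `L`-length `ℓ_L(σ) = inv(σ) - del_B(σ) + Σ Neg(σ⁻¹)`. -/
noncomputable def ellL (n : ℕ) (σ : Equiv.Perm ℤ) : ℤ :=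
  (invStat n σ : ℤ) - (delB n σ : ℤ) + negSum n σ⁻¹

/-- the `A`-descent set of `π ∈ L_{n+1}`. -/
noncomputable def desASet (n : ℕ) (π : Equiv.Perm ℤ) : Finset ℕ :=
  (Finset.Icc 1 (n - 1)).filter (fun i => ellL (n + 1) (π * a i) ≤ ellL (n + 1) π)

/-- the `A`-descent number of `π ∈ L_{n+1}`. -/
noncomputable def desA (n : ℕ) (π : Equiv.Perm ℤ) : ℕ := (desASet n π).card

/-- the `S`-descent set of `σ ∈ B_n`. -/
def desSSet (n : ℕ) (σ : Equiv.Perm ℤ) : Finset ℕ :=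
  (Finset.Icc 1 (n - 1)).filter (fun i => σ ((i : ℤ) + 1) < σ (i : ℤ))

/-- `maj_B(σ)`. -/
def majB (n : ℕ) (σ : Equiv.Perm ℤ) : ℕ := ∑ i ∈ desSSet n σ, i

/-- `rmaj_{B_n}(σ)`. -/
def rmajB (n : ℕ) (σ : Equiv.Perm ℤ) : ℕ := ∑ i ∈ desSSet n σ, (n - i)

/-- `rmaj_{L_{n+1}}(π)`. -/
noncomputable def rmajL (n : ℕ) (π : Equiv.Perm ℤ) : ℕ := ∑ i ∈ desASet n π, (n - i)

/-- `nrmaj_{L_{n+1}}(π) = rmaj_{L_{n+1}}(π) + Σ Neg(π⁻¹)`. -/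
noncomputable def nrmajL (n : ℕ) (π : Equiv.Perm ℤ) : ℤ := (rmajL n π : ℤ) + negSum (n + 1) π⁻¹

/-- `s_j s_{j-1} ⋯ s_{j-k+1}` (k factors). -/
def rS (j k : ℕ) : Equiv.Perm ℤ := ((List.range k).map (fun t => s (j - t))).prod

/-- `R_j^S = {1, s_j, s_j s_{j-1}, …, s_j ⋯ s_1}`. -/
def RS (j : ℕ) : Set (Equiv.Perm ℤ) := {σ | ∃ k ≤ j, σ = rS j k}

/-- the word `s_j s_{j-1} ⋯` of length `k` running down to `s_0` and possibly back up. -/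
def wordB (j k : ℕ) : List ℕ :=
  ((List.range (min k (j + 1))).map (fun t => j - t)) ++
    ((List.range (k - (j + 1))).map (fun t => t + 1))

/-- the `k`-th element of `R_j^B`. -/
def rB (j k : ℕ) : Equiv.Perm ℤ := ((wordB j k).map s).prod

/-- `R_j^B = {1, s_j, …, s_j ⋯ s_1, s_j ⋯ s_1 s_0, s_j ⋯ s_1 s_0 s_1, …, s_j ⋯ s_1 s_0 s_1 ⋯ s_j}`. -/
def RB (j : ℕ) : Set (Equiv.Perm ℤ) := {σ | ∃ k ≤ 2 * j + 1, σ = rB j k}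

/-- the `k`-th element of `R_j^A`: `a_j ⋯ a_{j-k+1}` for `k ≤ j`, and `a_j ⋯ a_2 a_1⁻¹` for `k = j+1`. -/
def rA (j k : ℕ) : Equiv.Perm ℤ :=
  if k ≤ j then ((List.range k).map (fun t => a (j - t))).prod
  else ((List.range (j - 1)).map (fun t => a (j - t))).prod * (a 1)⁻¹

/-- `R_j^A = {1, a_j, a_j a_{j-1}, …, a_j ⋯ a_2 a_1, a_j ⋯ a_2 a_1⁻¹}`. -/
def RA (j : ℕ) : Set (Equiv.Perm ℤ) := {σ | ∃ k ≤ j + 1, σ = rA j k}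

/-- `R_j^L`. -/
def RL (j : ℕ) : Set (Equiv.Perm ℤ) :=
  if j = 0 then {1, a 0, a 1 * a 0 * (a 1)⁻¹, a 0 * a 1 * a 0 * (a 1)⁻¹}
  else RA j ∪ {σ | σ = rA j (j + 1) * a 0 ∨ σ = rA j (j + 1) * a 0 * (a 1)⁻¹ ∨
    ∃ m, 1 ≤ m ∧ m ≤ j ∧
      σ = rA j (j + 1) * a 0 * ((List.range m).map (fun t => a (t + 1))).prod}

/-!
For `τ ∈ B_j`, the window of `τ * rB j k` carries the entry `j + 1` at position `rBPos j k`
(or `-(j + 1)` at position `-rBPos j k` when `rBPos j k < 0`), and its other entries have absolute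
value at most `j`. So in a factorization `σ = σ₀ ⋯ σ_{n-1}` the last factor is determined by
`σ⁻¹ n`, and removing it leaves an element of `B_{n-1}`: existence and uniqueness follow by
induction on `n`.

For reducedness, the statistic `invB σ = inv σ - ∑_{σ i < 0} σ i` grows by at most one under right
multiplication by a generator, so it bounds the Coxeter length from below. Each letter of the word
of `rB j k` moves the entry `±(j + 1)` past a smaller one, so it raises `invB` by exactly one, and
`invB (σ₀ ⋯ σ_{n-1}) = ∑ j, k_j`, the length of the word.
-/

lemma s_apply (i : ℕ) (x : ℤ) : s i x =
    if i = 0 then (if x = 1 then -1 else if x = -1 then 1 else x)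
    else (if x = i then i + 1 else if x = i + 1 then i
      else if x = -i then -(i + 1) else if x = -(i + 1) then -i else x) := by
  rcases Nat.eq_zero_or_pos i with rfl | hi
  · simp [s, swap_apply_def]
  · simp only [s, if_neg hi.ne', Perm.mul_apply, swap_apply_def]
    split_ifs <;> omega

lemma s_involutive (i : ℕ) : Function.Involutive (s i) := by
  intro x
  rw [s_apply, s_apply]
  grind

lemma s_mul_self (i : ℕ) : s i * s i = 1 :=
  Perm.ext (s_involutive i)

lemma s_apply_self {i : ℕ} (hi : i ≠ 0) : s i i = i + 1 := by
  simp [s_apply, hi]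

lemma s_apply_add_one {i : ℕ} (hi : i ≠ 0) : s i (i + 1) = i := by
  simp [s_apply, hi]

lemma s_mem_Icc_iff {n i : ℕ} (hi : 1 ≤ i) (hin : i < n) {x : ℤ} :
    s i x ∈ Icc (1 : ℤ) n ↔ x ∈ Icc (1 : ℤ) n := by
  simp only [mem_Icc, s_apply, if_neg (by omega : i ≠ 0)]
  split_ifs <;> omega

lemma s_lt_s_iff {i : ℕ} (hi : 1 ≤ i) {x y : ℤ} (hx : 0 < x) (hy : 0 < y)
    (hxy : ¬(x = i ∧ y = i + 1)) (hyx : ¬(x = i + 1 ∧ y = i)) : s i x < s i y ↔ x < y := by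
  simp only [s_apply, if_neg (by omega : i ≠ 0)]
  split_ifs <;> omega

lemma s_zero_apply_of_ne {x : ℤ} (h₁ : x ≠ 1) (h₂ : x ≠ -1) : s 0 x = x := by
  simp [s_apply, h₁, h₂]

lemma s_zero_apply_one : s 0 1 = -1 := by
  simp [s_apply]

namespace isB

variable {n : ℕ} {σ τ : Perm ℤ}

lemma one (n : ℕ) : isB n 1 := ⟨fun _ => rfl, fun _ _ => rfl⟩

lemma mul (hσ : isB n σ) (hτ : isB n τ) : isB n (σ * τ) :=
  ⟨fun i => by simp [hτ.1, hσ.1], fun i hi => by simp [hτ.2 i hi, hσ.2 i hi]⟩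

lemma inv (hσ : isB n σ) : isB n σ⁻¹ :=
  ⟨fun i => σ.injective <| by simp [hσ.1], fun i hi => σ.injective <| by simp [hσ.2 i hi]⟩

lemma mono {m : ℕ} (hnm : n ≤ m) (hσ : isB n σ) : isB m σ :=
  ⟨hσ.1, fun i hi => hσ.2 i <| lt_of_le_of_lt (by exact_mod_cast hnm) hi⟩

lemma apply_zero (hσ : isB n σ) : σ 0 = 0 := by
  have := hσ.1 0
  rw [neg_zero] at this
  omega

lemma apply_ne_zero (hσ : isB n σ) {x : ℤ} (hx : x ≠ 0) : σ x ≠ 0 :=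
  fun h => hx <| σ.injective <| h.trans hσ.apply_zero.symm

lemma abs_apply_le (hσ : isB n σ) {x : ℤ} (hx : |x| ≤ n) : |σ x| ≤ n := by
  by_contra! h
  rw [σ.injective (hσ.2 (σ x) h)] at h
  omega

lemma abs_apply_injOn (hσ : isB n σ) : Set.InjOn (fun b => |σ b|) (Icc (1 : ℤ) n) := by
  intro b hb c hc h
  simp only [coe_Icc, Set.mem_Icc] at hb hc
  rcases abs_eq_abs.1 h with h | h
  · exact σ.injective h
  · rw [← hσ.1] at h
    have := σ.injective h
    omega

lemma image_abs_apply_Icc (hσ : isB n σ) :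
    (Icc (1 : ℤ) n).image (fun b => |σ b|) = Icc (1 : ℤ) n := by
  have hmaps : ∀ b ∈ Icc (1 : ℤ) n, |σ b| ∈ Icc (1 : ℤ) n := fun b hb => by
    rw [mem_Icc] at hb ⊢
    have := hσ.abs_apply_le (x := b) (by rw [abs_le]; omega)
    have := abs_pos.2 (hσ.apply_ne_zero (x := b) (by omega))
    omega
  refine eq_of_subset_of_card_le (fun c hc => ?_) ?_
  · obtain ⟨b, hb, rfl⟩ := mem_image.1 hc
    exact hmaps b hb
  · rw [card_image_of_injOn (hσ.abs_apply_injOn)]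

lemma card_filter_abs_apply_lt (hσ : isB n σ) {A : ℤ} (hA : 1 ≤ A)
    (hAn : A ≤ n + 1) : (#((Icc (1 : ℤ) n).filter fun b => |σ b| < A) : ℤ) = A - 1 := by
  rw [← card_image_of_injOn (hσ.abs_apply_injOn.mono (filter_subset _ _)),
    ← filter_image (p := (· < A)), hσ.image_abs_apply_Icc,
    show (Icc (1 : ℤ) n).filter (· < A) = Icc 1 (A - 1) by ext; simp; omega, Int.card_Icc]
  omega

lemma apply_natCast_succ (hσ : isB n σ) : σ (n + 1) = n + 1 :=
  hσ.2 _ <| by rw [abs_of_nonneg (by positivity)]; omega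

lemma of_apply_succ_eq (hτ : isB (n + 1) τ) (htop : τ (n + 1) = n + 1) : isB n τ := by
  refine ⟨hτ.1, fun x hx => ?_⟩
  rcases eq_or_ne |x| (n + 1) with hx' | hx'
  · rcases abs_eq (by positivity) |>.1 hx' with rfl | rfl
    · exact htop
    · rw [hτ.1, htop]
  · exact hτ.2 x (by push_cast; omega)


end isB

lemma isB_s {n i : ℕ} (h : i < n) : isB n (s i) := by
  refine ⟨fun x => ?_, fun x hx => ?_⟩ <;> simp only [s_apply]
  · split_ifs <;> omega
  · rw [lt_abs] at hx
    split_ifs <;> omega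

def groupB (n : ℕ) : Subgroup (Perm ℤ) where
  carrier := {σ | isB n σ}
  one_mem' := isB.one n
  mul_mem' := isB.mul
  inv_mem' := isB.inv

lemma isB_list_prod_s {n : ℕ} {l : List ℕ} (hl : ∀ i ∈ l, i < n) : isB n (l.map s).prod :=
  (groupB n).list_prod_mem <| by simpa using fun i hi => show s i ∈ groupB n from isB_s (hl i hi)

lemma wordB_succ (j k : ℕ) :
    wordB j (k + 1) = wordB j k ++ [if k ≤ j then j - k else k - j] := by
  rcases le_or_gt k j with h | h
  · simp [wordB, Nat.min_eq_left (by omega : k ≤ j + 1),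
      Nat.sub_eq_zero_of_le (by omega : k + 1 ≤ j + 1),
      Nat.sub_eq_zero_of_le (by omega : k ≤ j + 1),
      List.range_succ, h]
  · simp only [wordB, Nat.min_eq_right (by omega : j + 1 ≤ k + 1), Nat.min_eq_right h,
      if_neg h.not_ge, List.append_assoc, show k + 1 - (j + 1) = k - (j + 1) + 1 by omega,
      List.range_succ, List.map_append]
    simp [show k - (j + 1) + 1 = k - j by omega]

lemma length_wordB (j k : ℕ) : (wordB j k).length = k := by
  simp only [wordB, List.length_append, List.length_map, List.length_range]
  omega

lemma le_of_mem_wordB {j k t : ℕ} (hk : k ≤ 2 * j + 1) (ht : t ∈ wordB j k) : t ≤ j := by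
  simp only [wordB, List.mem_append, List.mem_map, List.mem_range] at ht
  rcases ht with ⟨u, hu, rfl⟩ | ⟨u, hu, rfl⟩ <;> omega

lemma rB_zero (j : ℕ) : rB j 0 = 1 := by simp [rB, wordB]

lemma rB_succ (j k : ℕ) : rB j (k + 1) = rB j k * s (if k ≤ j then j - k else k - j) := by
  simp [rB, wordB_succ]

lemma isB_rB {j k : ℕ} (hk : k ≤ 2 * j + 1) : isB (j + 1) (rB j k) :=
  isB_list_prod_s fun _ ht => Nat.lt_succ_of_le (le_of_mem_wordB hk ht)

/-- As `k` grows, the preimage of `j + 1` under `rB j k` runs through `j + 1, j, …, 1` and then,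
past the letter `s 0`, through `-1, -2, …, -(j + 1)`. -/
def rBPos (j k : ℕ) : ℤ := if k ≤ j then j + 1 - k else j - k

lemma s_apply_rBPos_succ (j k : ℕ) :
    s (if k ≤ j then j - k else k - j) (rBPos j (k + 1)) = rBPos j k := by
  simp only [rBPos, s_apply]
  split_ifs <;> omega

lemma rB_apply_rBPos (j k : ℕ) : rB j k (rBPos j k) = j + 1 := by
  induction k with
  | zero => simp [rB_zero, rBPos]
  | succ k ih => rw [rB_succ, Perm.mul_apply, s_apply_rBPos_succ, ih]

lemma rB_inv_apply (j k : ℕ) : (rB j k)⁻¹ (j + 1) = rBPos j k :=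
  Perm.inv_eq_iff_eq.2 (rB_apply_rBPos j k).symm

lemma rBPos_injective (j : ℕ) : Function.Injective (rBPos j) := by
  intro k₁ k₂ h
  simp only [rBPos] at h
  split_ifs at h <;> omega

lemma exists_rBPos_eq {j : ℕ} {c : ℤ} (hc : c ≠ 0) (hcj : |c| ≤ j + 1) :
    ∃ k ≤ 2 * j + 1, rBPos j k = c := by
  rw [abs_le] at hcj
  refine ⟨(if 0 < c then j + 1 - c else j - c).toNat, by split_ifs <;> omega, ?_⟩
  simp only [rBPos]
  split_ifs <;> omega

/-- Björner–Brenti, Prop. 8.1.1: on `B_n` this is the Coxeter length. -/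
noncomputable def invB (n : ℕ) (σ : Perm ℤ) : ℤ := invStat n σ - ∑ i ∈ negSet n σ, σ i

lemma invB_one (n : ℕ) : invB n 1 = 0 := by
  have h₁ : invStat n 1 = 0 := by
    rw [invStat, card_eq_zero, filter_eq_empty_iff]
    intro p _
    simp only [Perm.one_apply]
    omega
  have h₂ : negSet n 1 = ∅ := by
    rw [negSet, filter_eq_empty_iff]
    intro x hx
    simp only [mem_Icc, Perm.one_apply] at hx ⊢
    omega
  simp [invB, h₁, h₂]

lemma invStat_mul_s_of_lt {n i : ℕ} {σ : Perm ℤ} (hi : 1 ≤ i) (hin : i < n)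
    (hasc : σ i < σ (i + 1)) : invStat n (σ * s i) = invStat n σ + 1 := by
  have hi₁ := s_apply_self (by omega : i ≠ 0)
  have hi₂ := s_apply_add_one (by omega : i ≠ 0)
  have hreindex : invStat n (σ * s i) = #((Icc (1 : ℤ) n ×ˢ Icc (1 : ℤ) n).filter
      fun p => s i p.1 < s i p.2 ∧ σ p.2 < σ p.1) := by
    refine card_equiv ((s i).prodCongr (s i)) fun p => ?_
    rw [mem_filter, mem_filter]
    simp [s_mem_Icc_iff hi hin, s_involutive i _]
  have hinsert : (Icc (1 : ℤ) n ×ˢ Icc (1 : ℤ) n).filter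
      (fun p => s i p.1 < s i p.2 ∧ σ p.2 < σ p.1) =
      insert ((i : ℤ) + 1, (i : ℤ)) ((Icc (1 : ℤ) n ×ˢ Icc (1 : ℤ) n).filter
        fun p => p.1 < p.2 ∧ σ p.2 < σ p.1) := by
    ext ⟨x, y⟩
    simp only [mem_filter, mem_product, mem_Icc, mem_insert, Prod.mk.injEq]
    by_cases h₁ : x = i + 1 ∧ y = i
    · obtain ⟨rfl, rfl⟩ := h₁
      simp only [hi₁, hi₂, hasc, and_true, true_or, iff_true]
      omega
    by_cases h₂ : x = i ∧ y = i + 1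
    · obtain ⟨rfl, rfl⟩ := h₂
      simp only [hi₁, hi₂]
      omega
    constructor
    · rintro ⟨hxy, hord, hσ⟩
      exact Or.inr ⟨hxy, (s_lt_s_iff hi (by omega) (by omega) h₂ h₁).1 hord, hσ⟩
    · rintro (h | ⟨hxy, hord, hσ⟩)
      · exact absurd h h₁
      · exact ⟨hxy, (s_lt_s_iff hi (by omega) (by omega) h₂ h₁).2 hord, hσ⟩
  rw [hreindex, hinsert, card_insert_of_notMem (by simp), invStat]

lemma sum_negSet_mul_s {n i : ℕ} (σ : Perm ℤ) (hi : 1 ≤ i) (hin : i < n) :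
    ∑ x ∈ negSet n (σ * s i), (σ * s i) x = ∑ x ∈ negSet n σ, σ x :=
  sum_equiv (s i) (fun x => by simp only [negSet, mem_filter, s_mem_Icc_iff hi hin]; rfl)
    (fun _ _ => by simp)

lemma invStat_sub_invStat_mul_s_zero {n : ℕ} {σ : Perm ℤ} (hσ : isB n σ) (hn : 1 ≤ n)
    (hpos : 0 < σ 1) : (invStat n σ : ℤ) - invStat n (σ * s 0) = σ 1 - 1 := by
  have hle : σ 1 ≤ n := by simpa [abs_of_pos hpos] using hσ.abs_apply_le (x := 1) (by simp; omega)
  -- passing from `σ` to `σ * s 0` loses exactly the inversions `(1, y)` with `|σ y| < σ 1`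
  have hdiff : ∀ p ∈ Icc (1 : ℤ) n ×ˢ Icc (1 : ℤ) n,
      ((if p.1 < p.2 ∧ σ p.2 < σ p.1 then 1 else 0) -
        if p.1 < p.2 ∧ (σ * s 0) p.2 < (σ * s 0) p.1 then 1 else 0 : ℤ) =
      if p.1 = 1 ∧ |σ p.2| < σ 1 then 1 else 0 := by
    rintro ⟨x, y⟩ hp
    simp only [mem_product, mem_Icc] at hp
    have hne : y ≠ 1 → σ y ≠ σ 1 := fun hy h => hy (σ.injective h)
    have hne' : σ y ≠ -σ 1 := fun h => by
      have := σ.injective (h.trans (hσ.1 1).symm)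
      omega
    simp only [Perm.mul_apply, abs_lt]
    rcases eq_or_ne y 1 with rfl | hy
    · split_ifs <;> omega
    simp only [s_zero_apply_of_ne hy (by omega : y ≠ -1)]
    rcases eq_or_ne x 1 with rfl | hx
    · simp only [s_zero_apply_one, hσ.1, true_and]
      split_ifs <;> omega
    · simp only [s_zero_apply_of_ne hx (by omega : x ≠ -1)]
      split_ifs <;> omega
  rw [invStat, invStat, natCast_card_filter, natCast_card_filter, ← sum_sub_distrib,
    sum_congr rfl hdiff, ← natCast_card_filter, filter_product (· = 1) (|σ ·| < σ 1), card_product,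
    filter_eq', if_pos (by simp; omega), card_singleton, one_mul,
    hσ.card_filter_abs_apply_lt hpos (by omega)]

lemma sum_negSet_mul_s_zero {n : ℕ} {σ : Perm ℤ} (hσ : isB n σ) (hn : 1 ≤ n) (hpos : 0 < σ 1) :
    ∑ x ∈ negSet n (σ * s 0), (σ * s 0) x = ∑ x ∈ negSet n σ, σ x - σ 1 := by
  have hnegSet : negSet n (σ * s 0) = insert 1 (negSet n σ) := by
    ext x
    simp only [negSet, mem_insert, mem_filter, mem_Icc]
    rw [Perm.mul_apply]
    rcases eq_or_ne x 1 with rfl | hx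
    · simp only [s_zero_apply_one, hσ.1, true_or, iff_true]
      omega
    constructor
    · rintro ⟨hxn, hneg⟩
      rw [s_zero_apply_of_ne hx (by omega)] at hneg
      exact Or.inr ⟨hxn, hneg⟩
    · rintro (rfl | ⟨hxn, hneg⟩)
      · exact absurd rfl hx
      · rw [s_zero_apply_of_ne hx (by omega)]
        exact ⟨hxn, hneg⟩
  have hfix : ∀ x ∈ negSet n σ, (σ * s 0) x = σ x := fun x hx => by
    simp only [negSet, mem_filter, mem_Icc] at hx
    rw [Perm.mul_apply, s_zero_apply_of_ne (by rintro rfl; omega) (by omega)]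
  rw [hnegSet, sum_insert (by simp [negSet, hpos.not_gt]), sum_congr rfl hfix, Perm.mul_apply,
    s_zero_apply_one, hσ.1]
  ring

lemma invB_mul_s_zero_of_pos {n : ℕ} {σ : Perm ℤ} (hσ : isB n σ) (hn : 1 ≤ n) (hpos : 0 < σ 1) :
    invB n (σ * s 0) = invB n σ + 1 := by
  have := invStat_sub_invStat_mul_s_zero hσ hn hpos
  rw [invB, invB, sum_negSet_mul_s_zero hσ hn hpos]
  linarith

lemma invB_mul_s_of_lt {n i : ℕ} {σ : Perm ℤ} (hi : 1 ≤ i) (hin : i < n) (hasc : σ i < σ (i + 1)) :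
    invB n (σ * s i) = invB n σ + 1 := by
  rw [invB, invB, invStat_mul_s_of_lt hi hin hasc, sum_negSet_mul_s σ hi hin]
  push_cast
  ring

lemma invB_mul_s_le {n i : ℕ} {σ : Perm ℤ} (hσ : isB n σ) (hin : i < n) :
    invB n (σ * s i) ≤ invB n σ + 1 := by
  -- without an ascent at `i` for `σ`, there is one for `σ * s i`, and `(σ * s i) * s i = σ`
  have hback : invB n (σ * s i * s i) = invB n σ := by rw [mul_assoc, s_mul_self, mul_one]
  rcases Nat.eq_zero_or_pos i with rfl | hi
  · rcases (hσ.apply_ne_zero one_ne_zero).lt_or_gt with hneg | hpos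
    · have := invB_mul_s_zero_of_pos (hσ.mul (isB_s hin)) hin
        (by rw [Perm.mul_apply, s_zero_apply_one, hσ.1]; omega)
      omega
    · exact (invB_mul_s_zero_of_pos hσ hin hpos).le
  · rcases (σ.injective.ne (by omega : (i : ℤ) ≠ i + 1)).lt_or_gt with hasc | hdesc
    · exact (invB_mul_s_of_lt hi hin hasc).le
    · have := invB_mul_s_of_lt (σ := σ * s i) hi hin
        (by rwa [Perm.mul_apply, Perm.mul_apply, s_apply_self hi.ne', s_apply_add_one hi.ne'])
      omega

lemma invB_list_prod_le_length {n : ℕ} {l : List ℕ} (hl : ∀ i ∈ l, i < n) :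
    invB n (l.map s).prod ≤ l.length := by
  induction l using List.reverseRecOn with
  | nil => simp [invB_one]
  | append_singleton l i ih =>
    have hl' : ∀ j ∈ l, j < n := fun j hj => hl j (by simp [hj])
    have := invB_mul_s_le (isB_list_prod_s hl') (hl i (by simp))
    simp only [List.map_append, List.prod_append, List.map_singleton, List.prod_singleton,
      List.length_append, List.length_singleton, Nat.cast_add, Nat.cast_one]
    linarith [ih hl']

section rB

variable {j : ℕ} {τ : Perm ℤ}

lemma isB.mul_rB_apply_rBPos (hτ : isB j τ) (k : ℕ) :
    (τ * rB j k) (rBPos j k) = j + 1 := by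
  rw [Perm.mul_apply, rB_apply_rBPos, hτ.apply_natCast_succ]

lemma isB.abs_mul_rB_apply_le (hτ : isB j τ) {k : ℕ} (hk : k ≤ 2 * j + 1) {x : ℤ} (hx : |x| ≤ j + 1)
    (hx₁ : x ≠ rBPos j k) (hx₂ : x ≠ -rBPos j k) : |(τ * rB j k) x| ≤ j := by
  have hσ : isB (j + 1) (τ * rB j k) := (hτ.mono j.le_succ).mul (isB_rB hk)
  have htop := hτ.mul_rB_apply_rBPos k
  have hbot : (τ * rB j k) (-rBPos j k) = -(j + 1) := by rw [hσ.1, htop]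
  have hle : |(τ * rB j k) x| ≤ j + 1 := by exact_mod_cast hσ.abs_apply_le (by exact_mod_cast hx)
  have hne₁ : (τ * rB j k) x ≠ j + 1 := fun h => hx₁ <| Equiv.injective _ (h.trans htop.symm)
  have hne₂ : (τ * rB j k) x ≠ -(j + 1) := fun h => hx₂ <| Equiv.injective _ (h.trans hbot.symm)
  rw [abs_le] at hle ⊢
  omega

/-- Each letter of the word of `rB j k` is an ascent: the entry `j + 1` (or `-(j + 1)`) that it
moves is larger (smaller) than every other entry of the window of `τ * rB j k`. -/
lemma invB_mul_rB_succ {n k : ℕ} (hjn : j < n) (hτ : isB j τ) (hk : k < 2 * j + 1) :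
    invB n (τ * rB j (k + 1)) = invB n (τ * rB j k) + 1 := by
  have hσ : isB n (τ * rB j k) := (hτ.mono hjn.le).mul ((isB_rB hk.le).mono hjn)
  have htop := hτ.mul_rB_apply_rBPos k
  have hsmall := fun x => hτ.abs_mul_rB_apply_le hk.le (x := x)
  rw [rB_succ, ← mul_assoc]
  rcases lt_trichotomy k j with h | rfl | h
  · have hpos : rBPos j k = (j - k : ℕ) + 1 := by simp only [rBPos]; split_ifs <;> omega
    have := hsmall (j - k : ℕ) (by rw [abs_le]; omega) (by omega) (by omega)
    rw [if_pos h.le]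
    refine invB_mul_s_of_lt (by omega) (by omega) ?_
    rw [abs_le] at this
    rw [← hpos, htop]
    omega
  · have hpos : rBPos k k = 1 := by simp [rBPos]
    rw [if_pos le_rfl, Nat.sub_self]
    refine invB_mul_s_zero_of_pos hσ (by omega) ?_
    rw [← hpos, htop]
    omega
  · have hpos : rBPos j k = -(k - j : ℕ) := by simp only [rBPos]; split_ifs <;> omega
    have := hsmall ((k - j : ℕ) + 1) (by rw [abs_le]; omega) (by omega) (by omega)
    rw [if_neg (by omega)]
    refine invB_mul_s_of_lt (by omega) (by omega) ?_
    have hneg : (τ * rB j k) (k - j : ℕ) = -(j + 1) := by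
      rw [show ((k - j : ℕ) : ℤ) = -rBPos j k by omega, hσ.1, htop]
    rw [abs_le] at this
    omega

lemma invB_mul_rB {n k : ℕ} (hjn : j < n) (hτ : isB j τ) (hk : k ≤ 2 * j + 1) :
    invB n (τ * rB j k) = invB n τ + k := by
  induction k with
  | zero => simp [rB_zero]
  | succ k ih =>
    rw [invB_mul_rB_succ hjn hτ (by omega), ih (by omega)]
    push_cast
    ring

end rB

def prodRB {n : ℕ} (ks : Fin n → ℕ) : Perm ℤ := (List.ofFn fun j : Fin n => rB j (ks j)).prod

lemma prodRB_succ {n : ℕ} (ks : Fin (n + 1) → ℕ) :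
    prodRB ks = prodRB (Fin.init ks) * rB n (ks (Fin.last n)) := by
  rw [prodRB, prodRB, List.ofFn_succ', List.prod_concat]
  rfl

lemma isB_prodRB {n : ℕ} {ks : Fin n → ℕ} (hks : ∀ j : Fin n, ks j ≤ 2 * j + 1) :
    isB n (prodRB ks) :=
  (groupB n).list_prod_mem <| by
    simpa using fun j : Fin n => show rB j (ks j) ∈ groupB n from (isB_rB (hks j)).mono j.2

lemma exists_prodRB_eq {n : ℕ} {σ : Perm ℤ} (hσ : isB n σ) :
    ∃ ks : Fin n → ℕ, (∀ j : Fin n, ks j ≤ 2 * j + 1) ∧ prodRB ks = σ := by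
  induction n generalizing σ with
  | zero =>
    refine ⟨Fin.elim0, fun j => j.elim0, Perm.ext fun x => ?_⟩
    rcases eq_or_ne x 0 with rfl | hx
    · exact hσ.apply_zero.symm
    · exact (hσ.2 x (by simpa using hx)).symm
  | succ n ih =>
    -- the last factor `rB n k` is the one moving `σ⁻¹ (n + 1)` to `n + 1`
    have hbound := hσ.inv.abs_apply_le (x := (n + 1 : ℕ)) (abs_of_nonneg (by positivity)).le
    push_cast at hbound
    obtain ⟨k, hk, hpos⟩ := exists_rBPos_eq (hσ.inv.apply_ne_zero (by omega)) hbound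
    have hτ : isB n (σ * (rB n k)⁻¹) := by
      refine (hσ.mul (isB_rB hk).inv).of_apply_succ_eq ?_
      rw [Perm.mul_apply, rB_inv_apply, hpos]
      simp
    obtain ⟨ks, hks, hprod⟩ := ih hτ
    refine ⟨Fin.snoc ks k, Fin.lastCases (by simpa using hk) (by simpa using hks), ?_⟩
    rw [prodRB_succ, Fin.init_snoc, Fin.snoc_last, hprod, inv_mul_cancel_right]

lemma prodRB_inv_apply {n : ℕ} {ks : Fin (n + 1) → ℕ} (hks : ∀ j : Fin (n + 1), ks j ≤ 2 * j + 1) :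
    (prodRB ks)⁻¹ (n + 1) = rBPos n (ks (Fin.last n)) := by
  have hinit : isB n (prodRB (Fin.init ks)) := isB_prodRB fun j => hks j.castSucc
  rw [prodRB_succ, mul_inv_rev, Perm.mul_apply, hinit.inv.apply_natCast_succ,
    rB_inv_apply]

lemma eq_of_prodRB_eq {n : ℕ} {ks ks' : Fin n → ℕ} (hks : ∀ j : Fin n, ks j ≤ 2 * j + 1)
    (hks' : ∀ j : Fin n, ks' j ≤ 2 * j + 1) (h : prodRB ks = prodRB ks') : ks = ks' := by
  induction n with
  | zero => exact funext fun j => j.elim0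
  | succ n ih =>
    have hlast : ks (Fin.last n) = ks' (Fin.last n) :=
      rBPos_injective n <| by rw [← prodRB_inv_apply hks, ← prodRB_inv_apply hks', h]
    have hinit : Fin.init ks = Fin.init ks' := by
      refine ih (fun j => hks j.castSucc) (fun j => hks' j.castSucc) ?_
      rwa [prodRB_succ, prodRB_succ, hlast, mul_left_inj] at h
    rw [← Fin.snoc_init_self ks, ← Fin.snoc_init_self ks', hinit, hlast]

lemma invB_prodRB {m n : ℕ} (hnm : n ≤ m) {ks : Fin n → ℕ} (hks : ∀ j : Fin n, ks j ≤ 2 * j + 1) :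
    invB m (prodRB ks) = ∑ j, (ks j : ℤ) := by
  induction n with
  | zero => simp [prodRB, invB_one]
  | succ n ih =>
    rw [prodRB_succ, invB_mul_rB hnm (isB_prodRB (ks := Fin.init ks) fun j => hks j.castSucc)
      (by simpa using hks (Fin.last n)), ih (by omega) (ks := Fin.init ks) fun j => hks j.castSucc,
      Fin.sum_univ_castSucc]
    rfl

lemma prodRB_eq_prod_word {n : ℕ} (ks : Fin n → ℕ) :
    prodRB ks = (((List.ofFn fun j : Fin n => wordB j (ks j)).flatten).map s).prod := by
  simp [prodRB, rB, List.map_flatten, List.prod_flatten, List.map_ofFn, Function.comp_def]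

lemma ellB_list_prod_le {n : ℕ} {l : List ℕ} (hl : ∀ i ∈ l, i < n) :
    ellB n (l.map s).prod ≤ l.length :=
  Nat.sInf_le ⟨l, rfl, hl, rfl⟩

lemma invB_list_prod_le_ellB {n : ℕ} {l : List ℕ} (hl : ∀ i ∈ l, i < n) :
    invB n (l.map s).prod ≤ ellB n (l.map s).prod := by
  obtain ⟨l', hlen, hl', hprod⟩ := Nat.sInf_mem (⟨_, l, rfl, hl, rfl⟩ : {k | ∃ l' : List ℕ,
    l'.length = k ∧ (∀ i ∈ l', i < n) ∧ (l'.map s).prod = (l.map s).prod}.Nonempty)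
  rw [ellB, ← hlen, ← hprod]
  exact invB_list_prod_le_length hl'

lemma ellB_prodRB {n : ℕ} {ks : Fin n → ℕ} (hks : ∀ j : Fin n, ks j ≤ 2 * j + 1) :
    ellB n (prodRB ks) = ∑ j, ks j := by
  have hl : ∀ i ∈ (List.ofFn fun j : Fin n => wordB j (ks j)).flatten, i < n := by
    simp only [List.mem_flatten, List.mem_ofFn, forall_exists_index, and_imp]
    rintro i _ j rfl hi
    exact (le_of_mem_wordB (hks j) hi).trans_lt j.2
  have hlen : ((List.ofFn fun j : Fin n => wordB j (ks j)).flatten).length = ∑ j, ks j := by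
    simp [List.length_flatten, List.sum_ofFn, length_wordB]
  refine le_antisymm ?_ ?_
  · rw [prodRB_eq_prod_word, ← hlen]
    exact ellB_list_prod_le hl
  · have := invB_list_prod_le_ellB hl
    rw [← prodRB_eq_prod_word, invB_prodRB le_rfl hks] at this
    exact_mod_cast this

/-- Here `σ_j = rB j (ks j)` is the element of `R_j^B` given by the word `wordB j (ks j)` of
length `ks j`, so reducedness reads `ellB n σ = ∑ j, ks j`. -/
theorem bCanonicalPresentation (n : ℕ) (σ : Equiv.Perm ℤ) (hσ : isB n σ) :
    (∃! ks : Fin n → ℕ, (∀ j : Fin n, ks j ≤ 2 * j.1 + 1) ∧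
        (List.ofFn fun j : Fin n => rB j.1 (ks j)).prod = σ) ∧
    (∀ ks : Fin n → ℕ, (∀ j : Fin n, ks j ≤ 2 * j.1 + 1) →
        (List.ofFn fun j : Fin n => rB j.1 (ks j)).prod = σ →
        ellB n σ = ∑ j : Fin n, ks j) := by
  obtain ⟨ks, hks, hprod⟩ := exists_prodRB_eq hσ
  refine ⟨⟨ks, ⟨hks, hprod⟩, fun ks' h' => eq_of_prodRB_eq h'.1 hks (h'.2.trans hprod.symm)⟩, ?_⟩
  rintro ks' hks' rfl
  exact ellB_prodRB hks'
end SignedEven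
end

section
/- The generators a_0, a_1, ..., a_{n-1} of L_{n+1} = C_2 wr A_{n+1} satisfy: a_0^2 = 1, (a_0 a_1)^6 = 1, (a_0 a_1^{-1})^6 = 1, and (a_0 a_i)^4 = 1 for all 1 < i <= n-1. -/
open Equiv Finset

namespace SignedEven

/-!
Each relator moves only points of small absolute value, so `(a₀a₁)⁶ = 1` and `(a₀a₁⁻¹)⁶ = 1`
reduce to a finite check on `{±1, ±2, ±3}`. For `i > 1`, `a₀aᵢ = (s₀s₁)s_{i+1}` where `s₀s₁` moves
only `±1, ±2` and `s_{i+1}` only `±(i+1), ±(i+2)`; the two factors commute, so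
`(a₀aᵢ)⁴ = (s₀s₁)⁴ s_{i+1}⁴ = 1`.
-/

open Equiv.Perm

lemma s_apply_of_lt {i : ℕ} {x : ℤ} (h : (i : ℤ) + 1 < |x|) : s i x = x := by
  rw [lt_abs] at h
  unfold s
  split_ifs
  · exact swap_apply_of_ne_of_ne (by omega) (by omega)
  · have h₁ : swap (-(i : ℤ)) (-(i + 1)) x = x := swap_apply_of_ne_of_ne (by omega) (by omega)
    have h₂ : swap (i : ℤ) (i + 1) x = x := swap_apply_of_ne_of_ne (by omega) (by omega)
    rw [Perm.mul_apply, h₁, h₂]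

lemma s_apply_of_abs_lt {i : ℕ} {x : ℤ} (h : |x| < i) : s i x = x := by
  rw [abs_lt] at h
  have hi : i ≠ 0 := by omega
  have h₁ : swap (-(i : ℤ)) (-(i + 1)) x = x := swap_apply_of_ne_of_ne (by omega) (by omega)
  have h₂ : swap (i : ℤ) (i + 1) x = x := swap_apply_of_ne_of_ne (by omega) (by omega)
  rw [s, if_neg hi, Perm.mul_apply, h₁, h₂]

lemma s_sq (i : ℕ) : s i ^ 2 = 1 := by
  unfold s
  split_ifs
  · rw [sq, swap_mul_self]
  · have hc : Commute (swap (i : ℤ) (i + 1)) (swap (-(i : ℤ)) (-(i + 1))) :=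
      disjoint_swap_swap (by
        simp only [List.nodup_cons, List.mem_cons, List.not_mem_nil, List.nodup_nil, or_false,
          not_false_eq_true, and_true]
        omega) |>.commute
    rw [hc.mul_pow, sq, sq, swap_mul_self, swap_mul_self, one_mul]

lemma s_inv (i : ℕ) : (s i)⁻¹ = s i := inv_eq_of_mul_eq_one_right (by rw [← sq, s_sq])

theorem _root_.Equiv.Perm.pow_eq_one_of_apply_eq_self_of_lt_abs {g : Perm ℤ} (m k : ℕ)
    (hg : ∀ x : ℤ, (m : ℤ) < |x| → g x = x) (hk : ∀ x ∈ Finset.Icc (-(m : ℤ)) m, (g ^ k) x = x) :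
    g ^ k = 1 := by
  ext x
  by_cases hx : x ∈ Finset.Icc (-(m : ℤ)) m
  · exact hk x hx
  · refine pow_apply_eq_self_of_apply_eq_self (hg x ?_) k
    rw [Finset.mem_Icc] at hx
    rw [lt_abs]; omega

lemma a_apply_of_lt {i : ℕ} {x : ℤ} (h : (i : ℤ) + 2 < |x|) : a i x = x := by
  unfold a
  split_ifs
  · exact s_apply_of_lt (by omega)
  · rw [Perm.mul_apply, s_apply_of_lt (i := i + 1) (by push_cast; omega),
      s_apply_of_lt (by push_cast; omega)]

lemma s_zero_mul_s_one_apply_of_lt {x : ℤ} (h : 2 < |x|) : (s 0 * s 1) x = x := by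
  rw [Perm.mul_apply, s_apply_of_lt (i := 1) (by push_cast; omega),
    s_apply_of_lt (by push_cast; omega)]

lemma s_zero_mul_s_one_pow_four : (s 0 * s 1) ^ 4 = 1 :=
  pow_eq_one_of_apply_eq_self_of_lt_abs 2 4 (fun _ hx => s_zero_mul_s_one_apply_of_lt hx)
    (by decide)

lemma a_zero_mul_a_one_pow_six : (a 0 * a 1) ^ 6 = 1 :=
  pow_eq_one_of_apply_eq_self_of_lt_abs 3 6
    (fun x hx => by
      rw [Perm.mul_apply, a_apply_of_lt (i := 1) (by push_cast; omega),
        a_apply_of_lt (by push_cast; omega)])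
    (by decide)

lemma a_one_inv : (a 1)⁻¹ = s 2 * s 1 := by
  rw [a, if_neg one_ne_zero, mul_inv_rev, s_inv, s_inv]

lemma a_zero_mul_a_one_inv_pow_six : (a 0 * (a 1)⁻¹) ^ 6 = 1 := by
  rw [a_one_inv]
  refine pow_eq_one_of_apply_eq_self_of_lt_abs 3 6 (fun x hx => ?_) (by decide)
  rw [Perm.mul_apply, Perm.mul_apply, s_apply_of_lt (i := 1) (by push_cast; omega),
    s_apply_of_lt (i := 2) (by push_cast; omega), a_apply_of_lt (by push_cast; omega)]

lemma disjoint_s_zero_mul_s_one_s {j : ℕ} (hj : 3 ≤ j) : Disjoint (s 0 * s 1) (s j) := by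
  intro x
  rcases lt_or_ge 2 |x| with hx | hx
  · exact Or.inl (s_zero_mul_s_one_apply_of_lt hx)
  · exact Or.inr (s_apply_of_abs_lt (by omega))

lemma a_zero_mul_a_pow_four {i : ℕ} (hi : 1 < i) : (a 0 * a i) ^ 4 = 1 := by
  have hai : a 0 * a i = s 0 * s 1 * s (i + 1) := by
    rw [a, a, if_pos rfl, if_neg (by omega), mul_assoc]
  have hs : s (i + 1) ^ 4 = 1 := by rw [show 4 = 2 * 2 from rfl, pow_mul, s_sq, one_pow]
  rw [hai, (disjoint_s_zero_mul_s_one_s (by omega)).commute.mul_pow, s_zero_mul_s_one_pow_four,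
    hs, one_mul]

/-- The generators `a₀, a₁, …, a_{n-1}` of `L_{n+1}` satisfy
`a₀² = 1`, `(a₀a₁)⁶ = 1`, `(a₀a₁⁻¹)⁶ = 1`, and `(a₀aᵢ)⁴ = 1` for `1 < i ≤ n-1`. -/
theorem lGeneratorRelations (n : ℕ) :
    a 0 ^ 2 = 1 ∧ (a 0 * a 1) ^ 6 = 1 ∧ (a 0 * (a 1)⁻¹) ^ 6 = 1 ∧
      ∀ i : ℕ, 1 < i → i ≤ n - 1 → (a 0 * a i) ^ 4 = 1 :=
  ⟨s_sq 0, a_zero_mul_a_one_pow_six, a_zero_mul_a_one_inv_pow_six,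
    fun _ hi _ => a_zero_mul_a_pow_four hi⟩
end SignedEven
end

section
/- There exists an involution phi of B_n such that for every sigma in B_n, maj_B(sigma) = rmaj_{B_n}(phi(sigma)) and Neg(sigma^{-1}) = Neg(phi(sigma)^{-1}). Consequently, maj_B and rmaj_{B_n} are equidistributed on B_n. -/
/-! Write `φ(σ) = g σ w₀`, where `w₀` reverses the positions `1, …, n` and `g` reverses the order of
the letters `σ(1), …, σ(n)`, extended to an odd map so that `φ(σ) ∈ B_n`. Both reversals turn
order around, so `i` is a descent of `φ(σ)` exactly when `n - i` is a descent of `σ`: this turns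
`maj_B` into `rmaj_{B_n}`. The set of letters of the window is unchanged; it determines both
`Neg(σ⁻¹) = {i : -i is a letter}` and `g`, so `Neg(σ⁻¹)` is preserved and `φ` is an involution. -/

open Equiv Finset

lemma Equiv.neg_mul_neg_eq_one (α : Type*) [InvolutiveNeg α] : Equiv.neg α * Equiv.neg α = 1 :=
  Equiv.ext neg_neg

namespace Finset

variable {α : Type*} [LinearOrder α] (T : Finset α)

noncomputable def orderRevPerm : Perm α :=
  Perm.ofSubtype ((T.orderIsoOfFin rfl).toEquiv.permCongr Fin.revPerm)

variable {T}

lemma orderRevPerm_apply_mem {v : α} (hv : v ∈ T) : T.orderRevPerm v ∈ T := by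
  rw [orderRevPerm, Perm.ofSubtype_apply_of_mem _ hv]
  exact Subtype.prop _

lemma orderRevPerm_apply_of_notMem {v : α} (hv : v ∉ T) : T.orderRevPerm v = v :=
  Perm.ofSubtype_apply_of_not_mem _ hv

variable (T) in
lemma orderRevPerm_mul_self : T.orderRevPerm * T.orderRevPerm = 1 := by
  rw [orderRevPerm, ← map_mul, ← permCongr_mul]
  convert map_one Perm.ofSubtype
  ext x
  simp

lemma orderRevPerm_lt_orderRevPerm_iff {a b : α} (ha : a ∈ T) (hb : b ∈ T) :
    T.orderRevPerm a < T.orderRevPerm b ↔ b < a := by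
  simp [orderRevPerm, Perm.ofSubtype_apply_of_mem _ ha, Perm.ofSubtype_apply_of_mem _ hb]

variable [InvolutiveNeg α]

variable (T) in
/-- On `T ∪ -T` this is the order reversal of `T` extended to an odd map; the two factors commute
as soon as `T` and `-T` are disjoint. -/
noncomputable def signedOrderRevPerm : Perm α :=
  T.orderRevPerm * (Equiv.neg α * T.orderRevPerm * Equiv.neg α)

lemma signedOrderRevPerm_apply_of_notMem {v : α} (hv : v ∉ T) (hnv : -v ∉ T) :
    T.signedOrderRevPerm v = v := by
  simp [signedOrderRevPerm, orderRevPerm_apply_of_notMem hv, orderRevPerm_apply_of_notMem hnv]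

section
variable (hT : ∀ t ∈ T, -t ∉ T)
include hT

lemma signedOrderRevPerm_apply_of_mem {v : α} (hv : v ∈ T) :
    T.signedOrderRevPerm v = T.orderRevPerm v := by
  simp [signedOrderRevPerm, orderRevPerm_apply_of_notMem (hT v hv)]

lemma map_signedOrderRevPerm : T.map T.signedOrderRevPerm.toEmbedding = T := by
  refine map_eq_of_subset fun t ht => ?_
  obtain ⟨s, hs, rfl⟩ := mem_map.mp ht
  rw [toEmbedding_apply, signedOrderRevPerm_apply_of_mem hT hs]
  exact orderRevPerm_apply_mem hs

lemma disjoint_orderRevPerm_conj_neg :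
    Perm.Disjoint T.orderRevPerm (Equiv.neg α * T.orderRevPerm * Equiv.neg α) := by
  intro v
  by_cases hv : v ∈ T
  · right
    simp [orderRevPerm_apply_of_notMem (hT v hv)]
  · exact .inl (orderRevPerm_apply_of_notMem hv)

lemma neg_mul_signedOrderRevPerm_mul_neg :
    Equiv.neg α * T.signedOrderRevPerm * Equiv.neg α = T.signedOrderRevPerm := by
  calc Equiv.neg α * (T.orderRevPerm * (Equiv.neg α * T.orderRevPerm * Equiv.neg α)) * Equiv.neg α
      = Equiv.neg α * T.orderRevPerm * Equiv.neg α * T.orderRevPerm *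
          (Equiv.neg α * Equiv.neg α) := by
        simp only [mul_assoc]
    _ = T.signedOrderRevPerm := by
        rw [neg_mul_neg_eq_one α, mul_one, ← (disjoint_orderRevPerm_conj_neg hT).commute.eq,
          signedOrderRevPerm]

lemma signedOrderRevPerm_neg (v : α) : T.signedOrderRevPerm (-v) = -T.signedOrderRevPerm v := by
  conv_rhs => rw [← neg_mul_signedOrderRevPerm_mul_neg hT]
  simp

lemma signedOrderRevPerm_mul_self : T.signedOrderRevPerm * T.signedOrderRevPerm = 1 := by
  rw [signedOrderRevPerm, (disjoint_orderRevPerm_conj_neg hT).commute.symm.mul_mul_mul_comm,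
    orderRevPerm_mul_self, one_mul]
  simp only [mul_assoc]
  rw [← mul_assoc (Equiv.neg α) (Equiv.neg α), neg_mul_neg_eq_one α, one_mul,
    ← mul_assoc T.orderRevPerm T.orderRevPerm, orderRevPerm_mul_self, one_mul, neg_mul_neg_eq_one α]

end

end Finset

namespace SignedEven

variable {n : ℕ} {σ τ : Perm ℤ}

lemma isB.mul_s10 (hσ : isB n σ) (hτ : isB n τ) : isB n (σ * τ) :=
  ⟨fun i => by simp only [Perm.mul_apply, hτ.1, hσ.1],
    fun i hi => by simp only [Perm.mul_apply, hτ.2 i hi, hσ.2 i hi]⟩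

lemma isB.abs_apply_le_s10 (hσ : isB n σ) {i : ℤ} (hi : |i| ≤ n) : |σ i| ≤ n := by
  by_contra! h
  have : σ i = i := σ.injective (hσ.2 _ h)
  rw [this] at h
  omega

def windowRev (n : ℕ) (i : ℤ) : ℤ :=
  if 1 ≤ i ∧ i ≤ n then n + 1 - i else if -n ≤ i ∧ i ≤ -1 then -n - 1 - i else i

lemma windowRev_involutive (n : ℕ) : Function.Involutive (windowRev n) := by
  intro i
  unfold windowRev
  split_ifs <;> omega

def windowRevPerm (n : ℕ) : Perm ℤ := (windowRev_involutive n).toPerm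

lemma windowRevPerm_apply {i : ℤ} (h₁ : 1 ≤ i) (h₂ : i ≤ n) : windowRevPerm n i = n + 1 - i :=
  if_pos ⟨h₁, h₂⟩

lemma windowRevPerm_mul_self (n : ℕ) : windowRevPerm n * windowRevPerm n = 1 :=
  Equiv.ext (windowRev_involutive n)

lemma isB_windowRevPerm (n : ℕ) : isB n (windowRevPerm n) := by
  refine ⟨fun i => ?_, fun i hi => ?_⟩ <;>
    simp only [windowRevPerm, Function.Involutive.coe_toPerm, windowRev]
  · split_ifs <;> omega
  · have := lt_abs.mp hi
    split_ifs <;> omega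

noncomputable def windowLetters (n : ℕ) (σ : Perm ℤ) : Finset ℤ :=
  (Icc (1 : ℤ) n).map σ.toEmbedding

lemma windowLetters_mul (n : ℕ) (σ τ : Perm ℤ) :
    windowLetters n (σ * τ) = (windowLetters n τ).map σ.toEmbedding := by
  rw [windowLetters, windowLetters, map_map]
  rfl

lemma windowLetters_windowRevPerm (n : ℕ) :
    windowLetters n (windowRevPerm n) = Icc (1 : ℤ) n := by
  refine map_eq_of_subset fun j hj => ?_
  obtain ⟨i, hi, rfl⟩ := mem_map.mp hj
  rw [mem_Icc] at hi ⊢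
  simp only [toEmbedding_apply, windowRevPerm_apply hi.1 hi.2]
  omega

lemma windowLetters_mul_windowRevPerm (n : ℕ) (σ : Perm ℤ) :
    windowLetters n (σ * windowRevPerm n) = windowLetters n σ := by
  rw [windowLetters_mul, windowLetters_windowRevPerm]
  rfl

lemma apply_mem_windowLetters {i : ℤ} (h₁ : 1 ≤ i) (h₂ : i ≤ n) : σ i ∈ windowLetters n σ :=
  mem_map_of_mem _ (mem_Icc.mpr ⟨h₁, h₂⟩)

lemma isB.abs_le_of_mem_windowLetters (hσ : isB n σ) {t : ℤ} (ht : t ∈ windowLetters n σ) :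
    |t| ≤ n := by
  obtain ⟨i, hi, rfl⟩ := mem_map.mp ht
  rw [mem_Icc] at hi
  exact hσ.abs_apply_le_s10 (by rw [abs_le]; omega)

lemma isB.neg_notMem_windowLetters (hσ : isB n σ) {t : ℤ} (ht : t ∈ windowLetters n σ) :
    -t ∉ windowLetters n σ := by
  intro hnt
  obtain ⟨i, hi, rfl⟩ := mem_map.mp ht
  obtain ⟨j, hj, hji⟩ := mem_map.mp hnt
  rw [mem_Icc] at hi hj
  have : j = -i := σ.injective (by rw [hσ.1]; exact hji)
  omega

lemma isB.negSet_inv (hσ : isB n σ) :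
    negSet n σ⁻¹ = (Icc (1 : ℤ) n).filter (fun i => -i ∈ windowLetters n σ) := by
  ext i
  simp only [negSet, mem_filter, mem_Icc, and_congr_right_iff]
  rintro ⟨h₁, h₂⟩
  constructor
  · intro hneg
    have hj : σ (σ⁻¹ i) = i := σ.apply_symm_apply i
    have : -n ≤ σ⁻¹ i := by
      by_contra! h
      have := hσ.2 _ (by rw [abs_of_neg hneg]; omega)
      omega
    rw [← hj, ← hσ.1]
    exact apply_mem_windowLetters (by omega) (by omega)
  · intro hi
    obtain ⟨k, hk, hki⟩ := mem_map.mp hi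
    rw [mem_Icc] at hk
    rw [toEmbedding_apply, ← neg_eq_iff_eq_neg, ← hσ.1] at hki
    rw [Perm.inv_eq_iff_eq.mpr hki.symm]
    omega

lemma isB_signedOrderRevPerm {T : Finset ℤ} (hT : ∀ t ∈ T, -t ∉ T)
    (hT_le : ∀ t ∈ T, |t| ≤ n) : isB n T.signedOrderRevPerm := by
  refine ⟨signedOrderRevPerm_neg hT, fun i hi => signedOrderRevPerm_apply_of_notMem ?_ ?_⟩
  · exact fun h => by have := hT_le _ h; omega
  · exact fun h => by have := hT_le _ h; rw [abs_neg] at this; omega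

lemma majB_eq_rmajB_of_descent_iff
    (h : ∀ i : ℕ, 1 ≤ i → i < n →
      (τ ((i : ℤ) + 1) < τ i ↔ σ (((n - i : ℕ) : ℤ) + 1) < σ ((n - i : ℕ) : ℤ))) :
    majB n σ = rmajB n τ := by
  refine sum_nbij' (n - ·) (n - ·) (fun j hj => ?_) (fun i hi => ?_) (fun j hj => ?_)
    (fun i hi => ?_) (fun j hj => ?_) <;>
    simp only [desSSet, mem_filter, mem_Icc] at *
  · refine ⟨by omega, (h (n - j) (by omega) (by omega)).mpr ?_⟩
    rw [Nat.sub_sub_self (by omega)]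
    exact hj.2
  · exact ⟨by omega, (h i (by omega) (by omega)).mp hi.2⟩
  all_goals omega

noncomputable def phi (n : ℕ) (σ : Perm ℤ) : Perm ℤ :=
  (windowLetters n σ).signedOrderRevPerm * σ * windowRevPerm n

lemma isB_phi (hσ : isB n σ) : isB n (phi n σ) :=
  ((isB_signedOrderRevPerm (fun _ => hσ.neg_notMem_windowLetters)
    (fun _ => hσ.abs_le_of_mem_windowLetters)).mul_s10 hσ).mul_s10 (isB_windowRevPerm n)

lemma isB.windowLetters_phi (hσ : isB n σ) : windowLetters n (phi n σ) = windowLetters n σ := by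
  rw [phi, windowLetters_mul_windowRevPerm, windowLetters_mul,
    map_signedOrderRevPerm (fun _ => hσ.neg_notMem_windowLetters)]

lemma isB.phi_phi (hσ : isB n σ) : phi n (phi n σ) = σ := by
  set g := (windowLetters n σ).signedOrderRevPerm
  rw [phi, hσ.windowLetters_phi, phi, show g * (g * σ * windowRevPerm n) * windowRevPerm n =
    g * g * σ * (windowRevPerm n * windowRevPerm n) by group,
    signedOrderRevPerm_mul_self (fun _ => hσ.neg_notMem_windowLetters), windowRevPerm_mul_self,
    one_mul, mul_one]

lemma isB.phi_apply (hσ : isB n σ) {i : ℤ} (h₁ : 1 ≤ i) (h₂ : i ≤ n) :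
    phi n σ i = (windowLetters n σ).orderRevPerm (σ (n + 1 - i)) := by
  rw [phi, Perm.mul_apply, Perm.mul_apply, windowRevPerm_apply h₁ h₂,
    signedOrderRevPerm_apply_of_mem (fun _ => hσ.neg_notMem_windowLetters)
      (apply_mem_windowLetters (by omega) (by omega))]

lemma isB.majB_eq_rmajB_phi (hσ : isB n σ) : majB n σ = rmajB n (phi n σ) := by
  refine majB_eq_rmajB_of_descent_iff fun i h₁ h₂ => ?_
  rw [hσ.phi_apply (by omega) (by omega), hσ.phi_apply (by omega) (by omega),
    orderRevPerm_lt_orderRevPerm_iff (apply_mem_windowLetters (by omega) (by omega))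
      (apply_mem_windowLetters (by omega) (by omega)),
    show (n : ℤ) + 1 - (i + 1) = ((n - i : ℕ) : ℤ) by omega,
    show (n : ℤ) + 1 - i = ((n - i : ℕ) : ℤ) + 1 by omega]

lemma isB.negSet_inv_phi (hσ : isB n σ) : negSet n (phi n σ)⁻¹ = negSet n σ⁻¹ := by
  rw [(isB_phi hσ).negSet_inv, hσ.windowLetters_phi, hσ.negSet_inv]

/-- There is an involution `φ` of `B_n` with
`maj_B(σ) = rmaj_{B_n}(φ(σ))` and `Neg(σ⁻¹) = Neg(φ(σ)⁻¹)`; consequently `maj_B` and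
`rmaj_{B_n}` are equidistributed on `B_n`. -/
theorem majRmajEquidistributed (n : ℕ) :
    (∃ φ : Equiv.Perm ℤ → Equiv.Perm ℤ,
      ∀ σ : Equiv.Perm ℤ, isB n σ →
        isB n (φ σ) ∧ φ (φ σ) = σ ∧ majB n σ = rmajB n (φ σ) ∧
          negSet n σ⁻¹ = negSet n (φ σ)⁻¹) ∧
    ∀ q : ℚ, ∑ᶠ σ ∈ {σ : Equiv.Perm ℤ | isB n σ}, q ^ majB n σ
      = ∑ᶠ σ ∈ {σ : Equiv.Perm ℤ | isB n σ}, q ^ rmajB n σ := by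
  refine ⟨⟨phi n, fun σ hσ =>
    ⟨isB_phi hσ, hσ.phi_phi, hσ.majB_eq_rmajB_phi, hσ.negSet_inv_phi.symm⟩⟩, fun q => ?_⟩
  have hinv : Set.InvOn (phi n) (phi n) {σ | isB n σ} {σ | isB n σ} :=
    ⟨fun _ hσ => isB.phi_phi hσ, fun _ hσ => isB.phi_phi hσ⟩
  exact finsum_mem_eq_of_bijOn (phi n) (hinv.bijOn (fun _ => isB_phi) (fun _ => isB_phi))
    fun σ hσ => by rw [isB.majB_eq_rmajB_phi hσ]
end SignedEven
end

section
/- For every permutation rho in S_{n+1} (viewed inside B_{n+1}), ell_L(rho) = ell_L(s_1 rho), where ell_L(sigma) = inv(sigma) - del_B(sigma) + sum of Neg(sigma^{-1}). -/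
/-!
For `ρ ∈ S_{n+1}` the term `Σ Neg(ρ⁻¹)` vanishes, so `ℓ_L = inv - del_B` on both sides, and
`s₁ρ` is `ρ` with the values `1` and `2` exchanged. Every other comparison between window entries
is unchanged. If `1` stands at position `p` before `2` at position `q`, the exchange creates the
inversion `(p, q)` and makes `q` a new left-to-right minimum, so `inv` and `del_B` both grow by
one. If `2` comes first, apply this to `s₁ρ` and use `s₁² = 1`. For `n = 0` both sides are `0`.
-/

open Equiv Finset

namespace SignedEven

lemma s_one_apply (x : ℤ) :
    s 1 x = if x = 1 then 2 else if x = 2 then 1 else if x = -1 then -2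
      else if x = -2 then -1 else x := by
  simp only [s, one_ne_zero, if_false, Nat.cast_one, Perm.mul_apply, swap_apply_def]
  grind

lemma s_one_pos_iff {x : ℤ} : 0 < s 1 x ↔ 0 < x := by
  rw [s_one_apply]; split_ifs <;> omega

lemma s_one_mul_self : s 1 * s 1 = 1 := by
  ext x
  simp only [Perm.mul_apply, Perm.one_apply, s_one_apply]
  grind

lemma isS.pos_of_apply_pos {m : ℕ} {σ : Perm ℤ} (h : isS m σ) (x : ℤ) (hx : 0 < σ x) :
    0 < x := by
  by_contra hx'
  rcases (not_lt.mp hx').lt_or_eq with hneg | rfl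
  · have := h.1.1 x
    have := h.2 (-x) (neg_pos.mpr hneg)
    omega
  · have h0 := h.1.1 0
    rw [neg_zero] at h0
    omega

lemma isS.inv_apply_mem_Icc {m : ℕ} {σ : Perm ℤ} (h : isS m σ) {k : ℤ}
    (hk : k ∈ Icc (1 : ℤ) m) : σ⁻¹ k ∈ Icc (1 : ℤ) m := by
  have hσk : σ (σ⁻¹ k) = k := Equiv.apply_symm_apply σ k
  rw [mem_Icc] at hk ⊢
  have hpos : 0 < σ⁻¹ k := h.pos_of_apply_pos _ (by omega)
  refine ⟨hpos, not_lt.mp fun hgt => ?_⟩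
  have := h.1.2 _ (by rwa [abs_of_pos hpos])
  omega

lemma isS.s_one_mul {m : ℕ} {σ : Perm ℤ} (h : isS m σ) (hm : 2 ≤ m) : isS m (s 1 * σ) := by
  refine ⟨⟨fun i => ?_, fun i hi => ?_⟩, fun i hi => s_one_pos_iff.mpr (h.2 i hi)⟩
  · simp only [Perm.mul_apply, h.1.1 i, s_one_apply]
    split_ifs <;> omega
  · rw [Perm.mul_apply, h.1.2 i hi, s_one_apply]
    rcases abs_choice i with habs | habs <;> rw [habs] at hi <;> split_ifs <;> omega

lemma pos_of_s_one_mul_apply_pos {σ : Perm ℤ} (h : ∀ x, 0 < σ x → 0 < x) (x : ℤ)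
    (hx : 0 < (s 1 * σ) x) : 0 < x :=
  h x (s_one_pos_iff.mp hx)

lemma negSum_inv_eq_zero (m : ℕ) {σ : Perm ℤ} (h : ∀ x, 0 < σ x → 0 < x) :
    negSum m σ⁻¹ = 0 := by
  rw [negSum, negSet, filter_false_of_mem, sum_empty]
  intro i hi
  exact not_lt.mpr (h _ (by rw [Perm.coe_inv, σ.apply_symm_apply]; exact (mem_Icc.mp hi).1)).le

lemma ellL_eq_invStat_sub_delB (m : ℕ) {σ : Perm ℤ} (h : ∀ x, 0 < σ x → 0 < x) :
    ellL m σ = invStat m σ - delB m σ := by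
  rw [ellL, negSum_inv_eq_zero m h, add_zero]

lemma ellL_one_eq_zero {σ : Perm ℤ} (h : ∀ x, 0 < σ x → 0 < x) : ellL 1 σ = 0 := by
  simp [ellL_eq_invStat_sub_delB 1 h, invStat, delB]

lemma s_one_mul_lt_iff {σ : Perm ℤ} (hpos : ∀ i, 0 < i → 0 < σ i) {p q : ℤ}
    (hσp : σ p = 1) (hσq : σ q = 2) {i j : ℤ} (hi : 0 < i) (hj : 0 < j)
    (hpq : (i, j) ≠ (p, q)) (hqp : (i, j) ≠ (q, p)) :
    (s 1 * σ) i < (s 1 * σ) j ↔ σ i < σ j := by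
  have hp : ∀ x, σ x = 1 ↔ x = p := fun x => by rw [← hσp, σ.injective.eq_iff]
  have hq : ∀ x, σ x = 2 ↔ x = q := fun x => by rw [← hσq, σ.injective.eq_iff]
  have := hp i; have := hp j; have := hq i; have := hq j
  have := hpos i hi; have := hpos j hj
  simp only [ne_eq, Prod.mk.injEq] at hpq hqp
  simp only [Perm.mul_apply, s_one_apply]
  split_ifs <;> omega

lemma invStat_s_one_mul {m : ℕ} {σ : Perm ℤ} (hpos : ∀ i, 0 < i → 0 < σ i) {p q : ℤ}
    (hp : p ∈ Icc (1 : ℤ) m) (hq : q ∈ Icc (1 : ℤ) m) (hσp : σ p = 1) (hσq : σ q = 2)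
    (hpq : p < q) : invStat m (s 1 * σ) = invStat m σ + 1 := by
  have hnew : (p, q) ∉ ((Icc (1 : ℤ) m) ×ˢ (Icc (1 : ℤ) m)).filter
      (fun x => x.1 < x.2 ∧ σ x.2 < σ x.1) := by
    simp [hσp, hσq]
  rw [invStat, invStat, ← card_insert_of_notMem hnew]
  congr 1
  ext ⟨i, j⟩
  by_cases hij : (i, j) = (p, q)
  · obtain ⟨rfl, rfl⟩ := Prod.mk.inj hij
    simp [hp, hq, hpq, hσp, hσq, s_one_apply]
  · simp only [mem_insert, mem_filter, mem_product, hij, false_or]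
    refine and_congr_right fun hmem => and_congr_right fun hlt =>
      s_one_mul_lt_iff hpos hσp hσq (mem_Icc.mp hmem.2).1 (mem_Icc.mp hmem.1).1 ?_ ?_
    · simp only [ne_eq, Prod.mk.injEq]; omega
    · simpa [eq_comm, and_comm] using hij

lemma delB_s_one_mul {m : ℕ} {σ : Perm ℤ} (hpos : ∀ i, 0 < i → 0 < σ i) {p q : ℤ}
    (hp : p ∈ Icc (1 : ℤ) m) (hq : q ∈ Icc (1 : ℤ) m) (hσp : σ p = 1) (hσq : σ q = 2)
    (hpq : p < q) : delB m (s 1 * σ) = delB m σ + 1 := by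
  have hnew : q ∉ (Icc (2 : ℤ) m).filter (fun j => ∀ i ∈ Icc (1 : ℤ) m, i < j → σ j < σ i) := by
    simp only [mem_filter, not_and, not_forall]
    exact fun _ => ⟨p, hp, hpq, by simp [hσp, hσq]⟩
  rw [delB, delB, ← card_insert_of_notMem hnew]
  congr 1
  ext j
  by_cases hjq : j = q
  · subst hjq
    have hσq' : (s 1 * σ) j = 1 := by simp [hσq, s_one_apply]
    simp only [mem_insert, true_or, iff_true, mem_filter, mem_Icc]
    refine ⟨⟨by have := (mem_Icc.mp hp).1; omega, (mem_Icc.mp hq).2⟩, fun i hi hij => ?_⟩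
    have hne : (s 1 * σ) i ≠ (s 1 * σ) j := (s 1 * σ).injective.ne hij.ne
    have hpos' : 0 < (s 1 * σ) i := s_one_pos_iff.mpr (hpos i hi.1)
    rw [hσq'] at hne ⊢
    omega
  · simp only [mem_insert, hjq, false_or, mem_filter]
    refine and_congr_right fun hj => forall₂_congr fun i hi => imp_congr_right fun _ =>
      s_one_mul_lt_iff hpos hσp hσq (by have := (mem_Icc.mp hj).1; omega) (mem_Icc.mp hi).1
        ?_ ?_
    all_goals simp only [ne_eq, Prod.mk.injEq]; omega

lemma ellL_s_one_mul_of_lt {m : ℕ} {σ : Perm ℤ} (h : isS m σ) {p q : ℤ}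
    (hp : p ∈ Icc (1 : ℤ) m) (hq : q ∈ Icc (1 : ℤ) m) (hσp : σ p = 1) (hσq : σ q = 2)
    (hpq : p < q) : ellL m (s 1 * σ) = ellL m σ := by
  rw [ellL_eq_invStat_sub_delB m h.pos_of_apply_pos,
    ellL_eq_invStat_sub_delB m (pos_of_s_one_mul_apply_pos h.pos_of_apply_pos),
    invStat_s_one_mul h.2 hp hq hσp hσq hpq, delB_s_one_mul h.2 hp hq hσp hσq hpq]
  push_cast
  ring

/-- For every `ρ ∈ S_{n+1} ⊆ B_{n+1}`, `ℓ_L(ρ) = ℓ_L(s₁ρ)`. -/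
theorem ellLLeftMulS1 (n : ℕ) (ρ : Equiv.Perm ℤ) (hρ : isS (n + 1) ρ) :
    ellL (n + 1) ρ = ellL (n + 1) (s 1 * ρ) := by
  rcases n.eq_zero_or_pos with rfl | hn
  · rw [ellL_one_eq_zero hρ.pos_of_apply_pos,
      ellL_one_eq_zero (pos_of_s_one_mul_apply_pos hρ.pos_of_apply_pos)]
  set p := ρ⁻¹ 1
  set q := ρ⁻¹ 2
  have hp : p ∈ Icc (1 : ℤ) ↑(n + 1) := hρ.inv_apply_mem_Icc (by simp)
  have hq : q ∈ Icc (1 : ℤ) ↑(n + 1) := hρ.inv_apply_mem_Icc (mem_Icc.mpr ⟨by norm_num, by push_cast; omega⟩)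
  have hρp : ρ p = 1 := Equiv.apply_symm_apply ρ 1
  have hρq : ρ q = 2 := Equiv.apply_symm_apply ρ 2
  rcases lt_or_gt_of_ne (ρ⁻¹.injective.ne (by norm_num) : p ≠ q) with hlt | hgt
  · exact (ellL_s_one_mul_of_lt hρ hp hq hρp hρq hlt).symm
  · have hτq : (s 1 * ρ) q = 1 := by simp [hρq, s_one_apply]
    have hτp : (s 1 * ρ) p = 2 := by simp [hρp, s_one_apply]
    have h := ellL_s_one_mul_of_lt (hρ.s_one_mul (by omega)) hq hp hτq hτp hgt
    rwa [← mul_assoc, s_one_mul_self, one_mul] at h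
end SignedEven
end

section
/- Let sigma' in B_{n+1} be a signed permutation whose window [sigma'(1),...,sigma'(n+1)] is strictly increasing. Then for every v in S_{n+1}: inv(sigma' v) = inv(v), del_B(sigma' v) = del_S(v), Neg((sigma' v)^{-1}) = Neg(sigma'^{-1}), and consequently ell_L(sigma' v) = ell_L(sigma') + ell_L(v). -/
open Equiv Finset

namespace SignedEven

/-! An increasing window makes `σ'` order-preserving on `[n+1]`, and `v` permutes `[n+1]`, so
every comparison `σ'(v i) < σ'(v j)` entering `inv` and `del_B` of `σ'v` is the comparison
`v i < v j`; for the same reason `σ'` has no inversions and no non-initial left-to-right minima.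
Since `v` is unsigned, `v⁻¹` preserves signs, so `(σ'v)⁻¹ = v⁻¹σ'⁻¹` has the negative entries of
`σ'⁻¹` and `v⁻¹` has none. -/

variable {m : ℕ} {σ v : Equiv.Perm ℤ}

theorem isS.apply_neg_iff (hv : isS m v) (x : ℤ) : v x < 0 ↔ x < 0 := by
  obtain ⟨⟨hodd, -⟩, hpos⟩ := hv
  rcases lt_trichotomy x 0 with hx | rfl | hx
  · have := hpos (-x) (neg_pos.2 hx)
    rw [hodd] at this
    exact iff_of_true (neg_pos.1 this) hx
  · have h0 := hodd 0
    rw [neg_zero] at h0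
    simp only [lt_irrefl, iff_false]
    omega
  · exact iff_of_false (hpos x hx).not_gt hx.not_gt

theorem isS.inv_apply_neg_iff (hv : isS m v) (y : ℤ) : v⁻¹ y < 0 ↔ y < 0 := by
  simpa using (hv.apply_neg_iff (v⁻¹ y)).symm

theorem isS.mapsTo_Icc (hv : isS m v) : Set.MapsTo v (Set.Icc 1 m) (Set.Icc 1 m) := by
  rintro x ⟨hx1, hxm⟩
  have hpos := hv.2 x (by omega)
  refine ⟨hpos, not_lt.1 fun hlt => ?_⟩
  have hfix : v (v x) = v x := hv.1.2 (v x) (by rwa [abs_of_pos hpos])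
  have := v.injective hfix
  omega

theorem invStat_mul_of_strictMonoOn (hσ : StrictMonoOn σ (Set.Icc 1 (m : ℤ)))
    (hv : Set.MapsTo v (Set.Icc 1 m) (Set.Icc 1 m)) : invStat m (σ * v) = invStat m v := by
  unfold invStat
  congr 1
  refine Finset.filter_congr fun p hp => ?_
  obtain ⟨h1, h2⟩ := Finset.mem_product.1 hp
  rw [Perm.mul_apply, Perm.mul_apply,
    hσ.lt_iff_lt (hv (Finset.mem_Icc.1 h2)) (hv (Finset.mem_Icc.1 h1))]

theorem delB_mul_of_strictMonoOn (hσ : StrictMonoOn σ (Set.Icc 1 (m : ℤ)))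
    (hv : Set.MapsTo v (Set.Icc 1 m) (Set.Icc 1 m)) : delB m (σ * v) = delB m v := by
  unfold delB
  congr 1
  refine Finset.filter_congr fun j hj => forall₂_congr fun i hi => ?_
  have hj' : j ∈ Set.Icc 1 (m : ℤ) := by
    rw [Finset.mem_Icc] at hj
    exact ⟨by omega, hj.2⟩
  rw [Perm.mul_apply, Perm.mul_apply, hσ.lt_iff_lt (hv hj') (hv (Finset.mem_Icc.1 hi))]

theorem invStat_eq_zero_of_strictMonoOn (hσ : StrictMonoOn σ (Set.Icc 1 (m : ℤ))) :
    invStat m σ = 0 := by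
  rw [invStat, Finset.card_eq_zero, Finset.filter_eq_empty_iff]
  rintro p hp ⟨hlt, hgt⟩
  obtain ⟨h1, h2⟩ := Finset.mem_product.1 hp
  exact (hσ (Finset.mem_Icc.1 h1) (Finset.mem_Icc.1 h2) hlt).not_gt hgt

theorem delB_eq_zero_of_strictMonoOn (hσ : StrictMonoOn σ (Set.Icc 1 (m : ℤ))) :
    delB m σ = 0 := by
  rw [delB, Finset.card_eq_zero, Finset.filter_eq_empty_iff]
  intro j hj hmin
  rw [Finset.mem_Icc] at hj
  have h1 : (1 : ℤ) ∈ Set.Icc 1 (m : ℤ) := ⟨le_rfl, by omega⟩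
  exact (hσ h1 ⟨by omega, hj.2⟩ (by omega)).not_gt
    (hmin 1 (Finset.mem_Icc.2 h1) (by omega))

theorem negSet_inv_mul_of_isS (σ : Equiv.Perm ℤ) (hv : isS m v) :
    negSet m (σ * v)⁻¹ = negSet m σ⁻¹ :=
  Finset.filter_congr fun i _ => by rw [mul_inv_rev, Perm.mul_apply, hv.inv_apply_neg_iff]

theorem negSet_inv_of_isS (hv : isS m v) : negSet m v⁻¹ = ∅ := by
  refine Finset.filter_eq_empty_iff.2 fun i hi hneg => ?_
  rw [hv.inv_apply_neg_iff] at hneg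
  rw [Finset.mem_Icc] at hi
  omega

theorem ellL_mul_of_strictMonoOn (hσ : StrictMonoOn σ (Set.Icc 1 (m : ℤ))) (hv : isS m v) :
    ellL m (σ * v) = ellL m σ + ellL m v := by
  simp only [ellL, negSum, invStat_mul_of_strictMonoOn hσ hv.mapsTo_Icc,
    delB_mul_of_strictMonoOn hσ hv.mapsTo_Icc, invStat_eq_zero_of_strictMonoOn hσ,
    delB_eq_zero_of_strictMonoOn hσ, negSet_inv_mul_of_isS σ hv, negSet_inv_of_isS hv,
    Finset.sum_empty]
  push_cast
  ring

theorem increasingWindowMul_general (n : ℕ) (σ' v : Equiv.Perm ℤ)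
    (hinc : ∀ i j : ℤ, 1 ≤ i → i < j → j ≤ (n : ℤ) + 1 → σ' i < σ' j)
    (hv : isS (n + 1) v) :
    invStat (n + 1) (σ' * v) = invStat (n + 1) v ∧
    delB (n + 1) (σ' * v) = delB (n + 1) v ∧
    negSet (n + 1) (σ' * v)⁻¹ = negSet (n + 1) σ'⁻¹ ∧
    ellL (n + 1) (σ' * v) = ellL (n + 1) σ' + ellL (n + 1) v := by
  have hσ' : StrictMonoOn σ' (Set.Icc 1 ((n + 1 : ℕ) : ℤ)) :=
    fun i hi j hj hij => hinc i j hi.1 hij (by push_cast at hj; exact hj.2)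
  exact ⟨invStat_mul_of_strictMonoOn hσ' hv.mapsTo_Icc, delB_mul_of_strictMonoOn hσ' hv.mapsTo_Icc,
    negSet_inv_mul_of_isS σ' hv, ellL_mul_of_strictMonoOn hσ' hv⟩

/-- If `σ' ∈ B_{n+1}` has a strictly increasing window, then for every
`v ∈ S_{n+1}`: `inv(σ'v) = inv(v)`, `del_B(σ'v) = del_S(v)`,
`Neg((σ'v)⁻¹) = Neg(σ'⁻¹)`, and `ℓ_L(σ'v) = ℓ_L(σ') + ℓ_L(v)`. -/
theorem increasingWindowMul (n : ℕ) (σ' v : Equiv.Perm ℤ) (hσ' : isB (n + 1) σ')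
    (hinc : ∀ i j : ℤ, 1 ≤ i → i < j → j ≤ (n : ℤ) + 1 → σ' i < σ' j)
    (hv : isS (n + 1) v) :
    invStat (n + 1) (σ' * v) = invStat (n + 1) v ∧
    delB (n + 1) (σ' * v) = delB (n + 1) v ∧
    negSet (n + 1) (σ' * v)⁻¹ = negSet (n + 1) σ'⁻¹ ∧
    ellL (n + 1) (σ' * v) = ellL (n + 1) σ' + ellL (n + 1) v :=
  increasingWindowMul_general n σ' v hinc hv
end SignedEven
end

section
/- Let pi in L_{n+1} and write pi = sigma u with sigma in L_{n+1} having des_A(sigma) = 0 and u = sigma^{-1} pi in A_{n+1}. Then ell_L(pi) = ell_A(u) + sum of the elements of Neg(pi^{-1}). -/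
open Equiv Finset

namespace SignedEven

/-!
Extend `ℓ_A = inv - del_B` to all signed permutations, so that `ℓ_L(π) = ℓ_A(π) + Σ Neg(π⁻¹)`.
Exchanging the window positions `j, j + 1` changes `inv` by `±1` and `del_B` by `0` or by the same
`±1`; hence `ℓ_A` does not grow when `j` is a descent or when the entry at `j + 1` is below every
entry left of `j`, and for `j = 1` it does not change at all. As `a_i = s_1 s_{i+1}` keeps signs,
`des_A(σ) = 0` then forces `σ(2) < σ(3) < ⋯ < σ(n+1)` and `σ(1) < σ(3)`: either `σ` or
`σ · (1 2)` is increasing on the window. Both statistics only see the relative order of the window,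
so `π = σu` has the `ℓ_A` of `u` or of `(1 2)u`; and exchanging the values `1` and `2` of `u`
(with `1` first) adds exactly one inversion and one left-to-right minimum.
-/

lemma card_filter_eq_card_filter_add_one {α : Type*} [DecidableEq α] {s : Finset α}
    {p q : α → Prop} [DecidablePred p] [DecidablePred q] {a : α} (ha : a ∈ s) (hpa : p a)
    (hqa : ¬q a) (h : ∀ x ∈ s, x ≠ a → (p x ↔ q x)) :
    #(s.filter p) = #(s.filter q) + 1 := by
  rw [← card_insert_of_notMem (by simp [hqa] : a ∉ s.filter q)]
  congr 1
  ext x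
  simp only [mem_filter, mem_insert]
  by_cases hx : x = a
  · subst hx; simp [ha, hpa]
  · simp only [hx, false_or]
    exact and_congr_right fun hxs => h x hxs hx

lemma swap_add_one_apply_lt_iff {j x y : ℤ} (hxy : ¬(x = j ∧ y = j + 1))
    (hyx : ¬(x = j + 1 ∧ y = j)) : swap j (j + 1) x < swap j (j + 1) y ↔ x < y := by
  simp only [swap_apply_def]
  split_ifs <;> omega

lemma strictMonoOn_Icc_one_of_Icc_two {α : Type*} [Preorder α] {f : ℤ → α} {M : ℤ}
    (h12 : f 1 < f 2) (h : StrictMonoOn f (Set.Icc 2 M)) : StrictMonoOn f (Set.Icc 1 M) := by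
  refine strictMonoOn_of_lt_add_one Set.ordConnected_Icc fun x _ hx hx' => ?_
  rcases (show x = 1 ∨ 2 ≤ x by have := hx.1; omega) with rfl | hx2
  · exact h12
  · exact h ⟨hx2, by linarith [hx'.2]⟩ ⟨by linarith, hx'.2⟩ (lt_add_one x)

noncomputable def ellA (n : ℕ) (σ : Perm ℤ) : ℤ := (invStat n σ : ℤ) - delB n σ

lemma ellL_eq_ellA_add_negSum (n : ℕ) (σ : Perm ℤ) : ellL n σ = ellA n σ + negSum n σ⁻¹ := rfl

section Window

variable {M : ℕ} {f g : Perm ℤ}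

lemma invStat_congr
    (h : ∀ x ∈ Set.Icc (1 : ℤ) M, ∀ y ∈ Set.Icc (1 : ℤ) M, f x < f y ↔ g x < g y) :
    invStat M f = invStat M g := by
  refine congrArg card (filter_congr fun r hr => ?_)
  simp only [mem_product, Finset.mem_Icc] at hr
  rw [h r.2 hr.2 r.1 hr.1]

lemma delB_congr
    (h : ∀ x ∈ Set.Icc (1 : ℤ) M, ∀ y ∈ Set.Icc (1 : ℤ) M, f x < f y ↔ g x < g y) :
    delB M f = delB M g := by
  refine congrArg card (filter_congr fun k hk => forall₂_congr fun i hi => ?_)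
  simp only [Finset.mem_Icc] at hk hi
  rw [h k ⟨by omega, hk.2⟩ i hi]

lemma ellA_congr
    (h : ∀ x ∈ Set.Icc (1 : ℤ) M, ∀ y ∈ Set.Icc (1 : ℤ) M, f x < f y ↔ g x < g y) :
    ellA M f = ellA M g := by
  rw [ellA, ellA, invStat_congr h, delB_congr h]

lemma ellA_mul_of_strictMonoOn {ρ v : Perm ℤ} (hρ : StrictMonoOn ρ (Set.Icc 1 M))
    (hv : Set.MapsTo v (Set.Icc 1 M) (Set.Icc 1 M)) : ellA M (ρ * v) = ellA M v :=
  ellA_congr fun _ hx _ hy => hρ.lt_iff_lt (hv hx) (hv hy)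

end Window

section AdjacentSwap

variable {M : ℕ} {τ : Perm ℤ} {j : ℤ}

lemma mapsTo_swap_add_one (hj : 1 ≤ j) (hjM : j + 1 ≤ M) :
    Set.MapsTo (swap j (j + 1)) (Set.Icc 1 M) (Set.Icc 1 M) := by
  rintro x ⟨hx1, hxM⟩
  rw [swap_apply_def]
  split_ifs <;> constructor <;> omega

lemma swap_add_one_mem_Icc (hj : 1 ≤ j) (hjM : j + 1 ≤ M) {x : ℤ}
    (hx : x ∈ Finset.Icc (1 : ℤ) M) : swap j (j + 1) x ∈ Finset.Icc (1 : ℤ) M :=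
  Finset.mem_Icc.2 (mapsTo_swap_add_one hj hjM (Finset.mem_Icc.1 hx))

lemma invStat_mul_swap (hj : 1 ≤ j) (hjM : j + 1 ≤ M) (hasc : τ j < τ (j + 1)) :
    invStat M (τ * swap j (j + 1)) = invStat M τ + 1 := by
  set w := swap j (j + 1)
  set W := Finset.Icc (1 : ℤ) M
  have hw : ∀ x ∈ W, w x ∈ W := fun x hx => swap_add_one_mem_Icc hj hjM hx
  have hww : ∀ x, w (w x) = x := swap_apply_self j (j + 1)
  calc invStat M (τ * w) = #((W ×ˢ W).filter fun r => w r.1 < w r.2 ∧ τ r.2 < τ r.1) := by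
        unfold invStat
        refine card_bij' (fun r _ => (w r.1, w r.2)) (fun r _ => (w r.1, w r.2)) ?_ ?_ ?_ ?_
        all_goals intro r hr
        all_goals first
          | rw [mem_filter] at hr ⊢
            simp only [mem_product, Perm.mul_apply, hww] at hr ⊢
            exact ⟨⟨hw _ hr.1.1, hw _ hr.1.2⟩, hr.2⟩
          | simp [hww]
    _ = invStat M τ + 1 := by
        refine card_filter_eq_card_filter_add_one (a := (j + 1, j)) ?_ ?_ ?_ ?_
        · simp only [W, mem_product, Finset.mem_Icc]; omega
        · simp only [w, swap_apply_left, swap_apply_right]; exact ⟨by omega, hasc⟩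
        · simp
        · rintro ⟨x, y⟩ _ hne
          by_cases hp : x = j ∧ y = j + 1
          · obtain ⟨rfl, rfl⟩ := hp
            simp only [w, swap_apply_left, swap_apply_right]
            constructor <;> rintro ⟨h, _⟩ <;> omega
          · have hq : ¬(x = j + 1 ∧ y = j) := by rintro ⟨rfl, rfl⟩; exact hne rfl
            simp only [w, swap_add_one_apply_lt_iff hp hq]

lemma lrMin_mul_swap_iff (hj : 1 ≤ j) (hjM : j + 1 ≤ M) {k : ℤ} (hkj : k ≠ j)
    (hkj' : k ≠ j + 1) :
    (∀ i ∈ Finset.Icc (1 : ℤ) M, i < k → (τ * swap j (j + 1)) k < (τ * swap j (j + 1)) i) ↔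
      ∀ i ∈ Finset.Icc (1 : ℤ) M, i < k → τ k < τ i := by
  have hwk : swap j (j + 1) k = k := swap_apply_of_ne_of_ne hkj hkj'
  have hw : ∀ i, swap j (j + 1) i < k ↔ i < k := fun i => by
    rw [← swap_add_one_apply_lt_iff (j := j) (x := i) (y := k) (by omega) (by omega), hwk]
  simp only [Perm.mul_apply, hwk]
  constructor
  · intro h i hi hik
    simpa only [swap_apply_self] using
      h _ (swap_add_one_mem_Icc hj hjM hi) ((hw i).2 hik)
  · exact fun h i hi hik => h _ (swap_add_one_mem_Icc hj hjM hi) ((hw i).2 hik)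

lemma delB_mul_swap_le (hj : 1 ≤ j) (hjM : j + 1 ≤ M) (hasc : τ j < τ (j + 1)) :
    delB M (τ * swap j (j + 1)) ≤ delB M τ + 1 := by
  unfold delB
  refine (card_le_card fun k hk => ?_).trans (card_insert_le (j + 1) _)
  rw [mem_filter] at hk
  rw [mem_insert, mem_filter]
  by_cases hkj' : k = j + 1
  · exact Or.inl hkj'
  refine Or.inr ⟨hk.1, ?_⟩
  by_cases hkj : k = j
  · subst hkj
    intro i hi hik
    have := hk.2 i hi hik
    rw [Perm.mul_apply, Perm.mul_apply, swap_apply_left,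
      swap_apply_of_ne_of_ne hik.ne (by omega)] at this
    exact hasc.trans this
  · exact (lrMin_mul_swap_iff hj hjM hkj hkj').1 hk.2

lemma delB_add_one_le_mul_swap (hj : 1 ≤ j) (hjM : j + 1 ≤ M) (hasc : τ j < τ (j + 1))
    (hmin : ∀ i, 1 ≤ i → i < j → τ (j + 1) < τ i) :
    delB M τ + 1 ≤ delB M (τ * swap j (j + 1)) := by
  unfold delB
  have hnot : j + 1 ∉ (Finset.Icc (2 : ℤ) M).filter
      (fun k => ∀ i ∈ Finset.Icc (1 : ℤ) M, i < k → τ k < τ i) := by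
    rw [mem_filter]
    rintro ⟨-, h⟩
    exact (h j (Finset.mem_Icc.2 ⟨hj, by omega⟩) (by omega)).asymm hasc
  rw [← card_insert_of_notMem hnot]
  refine card_le_card fun k hk => ?_
  rw [mem_insert, mem_filter] at hk
  rw [mem_filter]
  rcases hk with rfl | ⟨hkW, hk⟩
  · refine ⟨Finset.mem_Icc.2 ⟨by omega, hjM⟩, fun i hi hik => ?_⟩
    rw [Perm.mul_apply, Perm.mul_apply, swap_apply_right]
    rcases (show i = j ∨ i < j by omega) with rfl | hij
    · rwa [swap_apply_left]
    · rw [swap_apply_of_ne_of_ne hij.ne (by omega)]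
      exact hasc.trans (hmin i (Finset.mem_Icc.1 hi).1 hij)
  · refine ⟨hkW, ?_⟩
    by_cases hkj : k = j
    · subst hkj
      intro i hi hik
      rw [Perm.mul_apply, Perm.mul_apply, swap_apply_left,
        swap_apply_of_ne_of_ne hik.ne (by omega)]
      exact hmin i (Finset.mem_Icc.1 hi).1 hik
    · have hkj' : k ≠ j + 1 := by
        rintro rfl
        exact hnot (mem_filter.2 ⟨hkW, hk⟩)
      exact (lrMin_mul_swap_iff hj hjM hkj hkj').2 hk

lemma ellA_mul_swap_le (hj : 1 ≤ j) (hjM : j + 1 ≤ M)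
    (h : τ (j + 1) < τ j ∨ ∀ i, 1 ≤ i → i < j → τ (j + 1) < τ i) :
    ellA M (τ * swap j (j + 1)) ≤ ellA M τ := by
  by_cases hdesc : τ (j + 1) < τ j
  · set ρ := τ * swap j (j + 1)
    have hρ : ρ j < ρ (j + 1) := by
      simpa only [ρ, Perm.mul_apply, swap_apply_left, swap_apply_right] using hdesc
    have hinv := invStat_mul_swap hj hjM hρ
    have hdel := delB_mul_swap_le hj hjM hρ
    rw [mul_swap_mul_self] at hinv hdel
    unfold ellA
    omega
  · have hasc : τ j < τ (j + 1) :=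
      lt_of_le_of_ne (not_lt.1 hdesc) (τ.injective.ne (by omega))
    have hinv := invStat_mul_swap hj hjM hasc
    have hdel := delB_add_one_le_mul_swap hj hjM hasc (h.resolve_left hdesc)
    unfold ellA
    omega

lemma ellA_mul_swap_one_two (hM : 2 ≤ M) : ellA M (τ * swap 1 2) = ellA M τ := by
  have key (ρ : Perm ℤ) : ellA M (ρ * swap 1 2) ≤ ellA M ρ := by
    simpa only [one_add_one_eq_two] using ellA_mul_swap_le (τ := ρ) (j := 1) le_rfl
      (by omega) (Or.inr fun _ hi hi' => absurd hi' (not_lt.2 hi))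
  have key' := key (τ * swap 1 2)
  rw [mul_swap_mul_self] at key'
  exact le_antisymm (key τ) key'

end AdjacentSwap

section ValueSwap

variable {M : ℕ} {u : Perm ℤ}

lemma mapsTo_swap_one_two_mul (hM : 2 ≤ M) (hu : Set.MapsTo u (Set.Icc 1 M) (Set.Icc 1 M)) :
    Set.MapsTo (swap (1 : ℤ) 2 * u) (Set.Icc 1 M) (Set.Icc 1 M) := by
  rw [Perm.coe_mul, ← one_add_one_eq_two]
  exact (mapsTo_swap_add_one le_rfl (by omega)).comp hu

lemma swap_one_two_apply_lt_iff {x y : ℤ} (hxy : ¬(x = 1 ∧ y = 2)) (hyx : ¬(x = 2 ∧ y = 1)) :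
    swap (1 : ℤ) 2 x < swap (1 : ℤ) 2 y ↔ x < y := by
  simpa only [one_add_one_eq_two] using swap_add_one_apply_lt_iff (j := 1) (x := x) (y := y)
    (by omega) (by omega)

lemma ellA_swap_mul_of_lt (hu : Set.MapsTo u (Set.Icc 1 M) (Set.Icc 1 M)) {p q : ℤ}
    (hp : p ∈ Set.Icc (1 : ℤ) M) (hq : q ∈ Set.Icc (1 : ℤ) M) (hpq : p < q) (hup : u p = 1)
    (huq : u q = 2) : ellA M (swap (1 : ℤ) 2 * u) = ellA M u := by
  have hu1 : ∀ {x}, u x = 1 → x = p := fun h => u.injective (h.trans hup.symm)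
  have hu2 : ∀ {x}, u x = 2 → x = q := fun h => u.injective (h.trans huq.symm)
  have hinv : invStat M (swap (1 : ℤ) 2 * u) = invStat M u + 1 := by
    refine card_filter_eq_card_filter_add_one (a := (p, q)) ?_ ?_ ?_ ?_
    · exact mem_product.2 ⟨Finset.mem_Icc.2 hp, Finset.mem_Icc.2 hq⟩
    · simp only [Perm.mul_apply, hup, huq, swap_apply_left, swap_apply_right]
      exact ⟨hpq, by norm_num⟩
    · simp only [hup, huq]
      norm_num
    · rintro ⟨x, y⟩ - hne
      simp only [Perm.mul_apply]
      refine and_congr_right fun hxy => swap_one_two_apply_lt_iff ?_ ?_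
      · rintro ⟨hy, hx⟩
        have := hu1 hy
        have := hu2 hx
        omega
      · rintro ⟨hy, hx⟩
        exact hne (Prod.ext (hu1 hx) (hu2 hy))
  have hdel : delB M (swap (1 : ℤ) 2 * u) = delB M u + 1 := by
    refine card_filter_eq_card_filter_add_one (a := q) ?_ ?_ ?_ ?_
    · exact Finset.mem_Icc.2 ⟨by linarith [hp.1], hq.2⟩
    · intro i hi hiq
      obtain ⟨hui1, -⟩ := hu (Finset.mem_Icc.1 hi)
      have hui2 : u i ≠ 2 := fun h => hiq.ne (hu2 h)
      rw [Perm.mul_apply, Perm.mul_apply, huq, swap_apply_right, swap_apply_def]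
      split_ifs <;> omega
    · intro h
      have := h p (Finset.mem_Icc.2 hp) hpq
      omega
    · intro k _ hkq
      refine forall₂_congr fun i _ => imp_congr_right fun hik => ?_
      simp only [Perm.mul_apply]
      refine swap_one_two_apply_lt_iff ?_ (fun h => hkq (hu2 h.1))
      rintro ⟨hk, hi⟩
      have := hu1 hk
      have := hu2 hi
      omega
  unfold ellA
  rw [hinv, hdel]
  push_cast
  ring

lemma ellA_swap_mul (hM : 2 ≤ M) (hu : Set.BijOn u (Set.Icc 1 M) (Set.Icc 1 M)) :
    ellA M (swap (1 : ℤ) 2 * u) = ellA M u := by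
  obtain ⟨p, hp, hup⟩ := hu.surjOn (show (1 : ℤ) ∈ Set.Icc 1 (M : ℤ) by constructor <;> omega)
  obtain ⟨q, hq, huq⟩ := hu.surjOn (show (2 : ℤ) ∈ Set.Icc 1 (M : ℤ) by constructor <;> omega)
  rcases lt_or_gt_of_ne (show p ≠ q by rintro rfl; omega) with hpq | hqp
  · exact ellA_swap_mul_of_lt hu.mapsTo hp hq hpq hup huq
  · have h := ellA_swap_mul_of_lt (mapsTo_swap_one_two_mul hM hu.mapsTo) hq hp hqp
      (by rw [Perm.mul_apply, huq, swap_apply_right])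
      (by rw [Perm.mul_apply, hup, swap_apply_left])
    rw [swap_mul_self_mul] at h
    exact h.symm

end ValueSwap

section Generators

lemma s_apply_of_pos {j : ℕ} (hj : j ≠ 0) {x : ℤ} (hx : 0 < x) :
    s j x = swap (j : ℤ) (j + 1) x := by
  have : (1 : ℤ) ≤ j := by exact_mod_cast Nat.one_le_iff_ne_zero.2 hj
  simp only [s, if_neg hj, Perm.mul_apply, swap_apply_def]
  split_ifs <;> omega

lemma s_apply_neg_iff {j : ℕ} (hj : j ≠ 0) (z : ℤ) : s j z < 0 ↔ z < 0 := by
  have : (1 : ℤ) ≤ j := by exact_mod_cast Nat.one_le_iff_ne_zero.2 hj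
  simp only [s, if_neg hj, Perm.mul_apply, swap_apply_def]
  split_ifs <;> omega

lemma a_apply_neg_iff {i : ℕ} (hi : i ≠ 0) (z : ℤ) : a i z < 0 ↔ z < 0 := by
  rw [a, if_neg hi, Perm.mul_apply, s_apply_neg_iff one_ne_zero,
    s_apply_neg_iff i.succ_ne_zero]

lemma negSum_mul_a_inv {i : ℕ} (hi : i ≠ 0) (M : ℕ) (σ : Perm ℤ) :
    negSum M (σ * a i)⁻¹ = negSum M σ⁻¹ := by
  refine congrArg (fun t => ∑ x ∈ t, x) (filter_congr fun x _ => ?_)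
  rw [mul_inv_rev, Perm.mul_apply, ← a_apply_neg_iff hi, ← Perm.mul_apply, mul_inv_cancel,
    Perm.one_apply]

lemma ellA_mul_a {i : ℕ} (hi : i ≠ 0) (M : ℕ) (σ : Perm ℤ) :
    ellA M (σ * a i) = ellA M (σ * swap (1 : ℤ) 2 * swap ((i : ℤ) + 1) ((i : ℤ) + 1 + 1)) := by
  have hval : ∀ x : ℤ, 0 < x →
      (σ * a i) x = (σ * swap (1 : ℤ) 2 * swap ((i : ℤ) + 1) ((i : ℤ) + 1 + 1)) x := by
    intro x hx
    have hx' : 0 < swap ((i : ℤ) + 1) ((i : ℤ) + 1 + 1) x := by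
      rw [swap_apply_def]; split_ifs <;> omega
    rw [a, if_neg hi, Perm.mul_apply, Perm.mul_apply, s_apply_of_pos i.succ_ne_zero hx]
    push_cast
    rw [s_apply_of_pos one_ne_zero hx']
    rfl
  exact ellA_congr fun x hx y hy => by
    rw [hval x (by linarith [hx.1]), hval y (by linarith [hy.1])]

end Generators

lemma isS.bijOn_Icc {M : ℕ} {u : Perm ℤ} (hu : isS M u) :
    Set.BijOn u (Set.Icc 1 M) (Set.Icc 1 M) := by
  have hmaps : Set.MapsTo u (Set.Icc 1 M) (Set.Icc 1 M) := by
    rintro x ⟨hx1, hxM⟩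
    refine ⟨hu.2 x (by omega), not_lt.1 fun hgt => ?_⟩
    have hfix := hu.1.2 (u x) (by rwa [abs_of_pos (by omega)])
    have := u.injective hfix
    omega
  exact ((Set.finite_Icc 1 (M : ℤ)).injOn_iff_bijOn_of_mapsTo hmaps).1 u.injective.injOn

section DescentFree

variable {n : ℕ} {σ : Perm ℤ}

lemma ellL_mul_a_le {M i : ℕ} (hi : 1 ≤ i) (hiM : i + 2 ≤ M)
    (h : (σ * swap (1 : ℤ) 2) ((i : ℤ) + 1 + 1) < (σ * swap (1 : ℤ) 2) ((i : ℤ) + 1) ∨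
      ∀ k, 1 ≤ k → k < (i : ℤ) + 1 →
        (σ * swap (1 : ℤ) 2) ((i : ℤ) + 1 + 1) < (σ * swap (1 : ℤ) 2) k) :
    ellL M (σ * a i) ≤ ellL M σ := by
  rw [ellL_eq_ellA_add_negSum, ellL_eq_ellA_add_negSum, negSum_mul_a_inv (by omega),
    ellA_mul_a (by omega), add_le_add_iff_right]
  calc _ ≤ ellA M (σ * swap (1 : ℤ) 2) := ellA_mul_swap_le (by omega) (by omega) h
    _ = ellA M σ := ellA_mul_swap_one_two (by omega)

lemma ellL_lt_ellL_mul_a_of_desA_eq_zero (hdes : desA n σ = 0) {i : ℕ} (hi : 1 ≤ i)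
    (hin : i ≤ n - 1) : ellL (n + 1) σ < ellL (n + 1) (σ * a i) := by
  have hempty := card_eq_zero.1 hdes
  rw [desASet, filter_eq_empty_iff] at hempty
  exact not_le.1 (hempty (Finset.mem_Icc.2 ⟨hi, hin⟩))

lemma ascent_of_desA_eq_zero (hdes : desA n σ = 0) {j : ℤ} (hj : 2 ≤ j) (hjn : j ≤ n) :
    (σ * swap (1 : ℤ) 2) j < (σ * swap (1 : ℤ) 2) (j + 1) ∧
      ∃ k, 1 ≤ k ∧ k < j ∧ (σ * swap (1 : ℤ) 2) k < (σ * swap (1 : ℤ) 2) (j + 1) := by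
  set τ := σ * swap (1 : ℤ) 2
  obtain ⟨i, rfl⟩ : ∃ i : ℕ, j = i + 1 := ⟨(j - 1).toNat, by omega⟩
  have hlt := ellL_lt_ellL_mul_a_of_desA_eq_zero hdes (i := i) (by omega) (by omega)
  by_contra hcon
  refine (ellL_mul_a_le (M := n + 1) (by omega) (by omega) ?_).not_gt hlt
  by_cases hasc : τ (i + 1) < τ (i + 1 + 1)
  · refine Or.inr fun k hk hki => lt_of_le_of_ne ?_ (τ.injective.ne (by omega))
    exact not_lt.1 fun h => hcon ⟨hasc, k, hk, hki, h⟩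
  · exact Or.inl (lt_of_le_of_ne (not_lt.1 hasc) (τ.injective.ne (by omega)))

lemma strictMonoOn_Icc_two_of_desA_eq_zero (hdes : desA n σ = 0) :
    StrictMonoOn σ (Set.Icc 2 ((n + 1 : ℕ) : ℤ)) ∧
      StrictMonoOn (σ * swap (1 : ℤ) 2) (Set.Icc 2 ((n + 1 : ℕ) : ℤ)) := by
  have hτ : ∀ x : ℤ, 3 ≤ x → (σ * swap (1 : ℤ) 2) x = σ x := fun x hx => by
    rw [Perm.mul_apply, swap_apply_of_ne_of_ne (by omega) (by omega)]
  constructor <;> refine strictMonoOn_of_lt_add_one Set.ordConnected_Icc fun x _ hx hx' => ?_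
  all_goals have hxn : x ≤ n := by have := hx'.2; push_cast at this; omega
  · obtain ⟨hasc, k, hk, hkx, hlt⟩ := ascent_of_desA_eq_zero hdes hx.1 hxn
    rcases hx.1.eq_or_lt with rfl | hx3
    · obtain rfl : k = 1 := by omega
      rw [show (2 : ℤ) + 1 = 3 by norm_num] at hlt ⊢
      rwa [hτ 3 (by norm_num), Perm.mul_apply, swap_apply_left] at hlt
    · rwa [hτ x hx3, hτ (x + 1) (by omega)] at hasc
  · exact (ascent_of_desA_eq_zero hdes hx.1 hxn).1

lemma strictMonoOn_or_of_desA_eq_zero (hdes : desA n σ = 0) :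
    StrictMonoOn σ (Set.Icc 1 ((n + 1 : ℕ) : ℤ)) ∨
      1 ≤ n ∧ StrictMonoOn (σ * swap (1 : ℤ) 2) (Set.Icc 1 ((n + 1 : ℕ) : ℤ)) := by
  obtain ⟨hσ, hτ⟩ := strictMonoOn_Icc_two_of_desA_eq_zero hdes
  rcases lt_or_gt_of_ne (σ.injective.ne (show (1 : ℤ) ≠ 2 by norm_num)) with h | h
  · exact Or.inl (strictMonoOn_Icc_one_of_Icc_two h hσ)
  · rcases Nat.eq_zero_or_pos n with rfl | hn
    · exact Or.inl ((Set.subsingleton_Icc_of_ge (by norm_num)).strictMonoOn _)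
    · refine Or.inr ⟨hn, strictMonoOn_Icc_one_of_Icc_two ?_ hτ⟩
      rwa [Perm.mul_apply, Perm.mul_apply, swap_apply_left, swap_apply_right]

end DescentFree

theorem ellLFactorization_general (n : ℕ) (π σ : Equiv.Perm ℤ)
    (hdes : desA n σ = 0) (hu : isA (n + 1) (σ⁻¹ * π)) :
    ellL (n + 1) π
      = ((invStat (n + 1) (σ⁻¹ * π) : ℤ) - (delB (n + 1) (σ⁻¹ * π) : ℤ))
        + negSum (n + 1) π⁻¹ := by
  set u := σ⁻¹ * π
  have hπ : σ * u = π := mul_inv_cancel_left σ π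
  have hbij := hu.1.bijOn_Icc
  rw [ellL_eq_ellA_add_negSum, ← ellA, ← hπ]
  congr 1
  rcases strictMonoOn_or_of_desA_eq_zero hdes with hσ | ⟨hn, hτ⟩
  · exact ellA_mul_of_strictMonoOn hσ hbij.mapsTo
  · rw [show σ * u = σ * swap (1 : ℤ) 2 * (swap (1 : ℤ) 2 * u) by
        rw [mul_assoc, swap_mul_self_mul],
      ellA_mul_of_strictMonoOn hτ (mapsTo_swap_one_two_mul (by omega) hbij.mapsTo),
      ellA_swap_mul (by omega) hbij]

/-- If `π = σu ∈ L_{n+1}` with `σ ∈ L_{n+1}` descent-free and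
`u = σ⁻¹π ∈ A_{n+1}`, then `ℓ_L(π) = ℓ_A(u) + Σ_{i ∈ Neg(π⁻¹)} i`, where
`ℓ_A(u) = inv(u) - del_S(u)`. -/
theorem ellLFactorization (n : ℕ) (π σ : Equiv.Perm ℤ) (hπ : isL (n + 1) π)
    (hσ : isL (n + 1) σ) (hdes : desA n σ = 0) (hu : isA (n + 1) (σ⁻¹ * π)) :
    ellL (n + 1) π
      = ((invStat (n + 1) (σ⁻¹ * π) : ℤ) - (delB (n + 1) (σ⁻¹ * π) : ℤ))
        + negSum (n + 1) π⁻¹ :=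
  ellLFactorization_general n π σ hdes hu

end SignedEven
end
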